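/- arXiv:2411.19208 — 2 statements merged into one kernel-verified Lean document; each statement's English description precedes it below -/
import Mathlib

section
/- Let $n, \tilde{n}, d, p$ be integers with $0 \le d < \min\{n,\tilde{n}\}$ and $0 \le p \le \min\{n,\tilde{n}\}-d$. For $\tau \in \bar{\mathcal{S}}_{\le p}(n,d)$ and a $d$-subset $B$ of $[n]$ with elements $b_1 < \dots < b_d$, let $\gamma_{\tau,\tilde{n}}(B)$ be the set obtained from $B$ by replacing $b_j$ with $b_j + \tilde{n} - n$ for each $j$ such that the $(\tau,B,j)$-series is right-aligned. Define $\phi$ mapping $\tau \in \bar{\mathcal{S}}_{\le p}(n,d)$ to the sign function $\tilde{\tau}:\binom{[\tilde{n}]}{d}\to\{+,-\}$ with $\tilde{\tau}^{-1}(+)=\{\gamma_{\tau,\tilde{n}}(B) \mid B\in\tau^{-1}(+)\}$. Then $\phi$ is a bijection between $\bar{\mathcal{S}}_{\le p}(n,d)$ and $\bar{\mathcal{S}}_{\le p}(\tilde{n},d)$, and for all $\sigma,\sigma' \in \bar{\mathcal{S}}_{\le p}(n,d)$ one has $\sigma \preceq_{\bar{\mathcal{S}}} \sigma'$ if and only if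 $\phi(\sigma) \preceq_{\bar{\mathcal{S}}} \phi(\sigma')$. -/
/-! Common definitions: signotopes and co-signotopes on `[n] = {1, …, n}` (encoded as
`Finset.Icc 1 n` in `ℕ`), sign functions are `Finset ℕ → Bool` (`true` = `+`, `false` = `-`)
that vanish (are `-`) away from the relevant subsets. -/

open Classical in
/-- The sign function with `+`-set `S` (and `-` elsewhere). -/
noncomputable def ofPlusSet (S : Set (Finset ℕ)) : Finset ℕ → Bool :=
  fun A => if A ∈ S then true else false

/-- Number of sign changes in a list of signs. -/
def signChanges (l : List Bool) : ℕ :=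
  ((l.zip l.tail).filter fun p => p.1 ≠ p.2).length

/-- Number of `+`-subsets of a sign function. -/
noncomputable def plusCount (τ : Finset ℕ → Bool) : ℕ :=
  {A : Finset ℕ | τ A = true}.ncard

/-- The series of signs `τ (C ∪ {x})` for `x ∈ [n] \ C` in increasing order.
For a `d`-subset `B` with `i`-th smallest element `b`, `series n τ (B.erase b)` is
the `(τ,B,i)`-series. -/
def series (n : ℕ) (τ : Finset ℕ → Bool) (C : Finset ℕ) : List Bool :=
  ((Finset.Icc 1 n \ C).sort (· ≤ ·)).map fun x => τ (insert x C)

/-- An `r`-signotope on `[n]`, encoded as a sign function on all of `Finset ℕ`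
which is `-` away from the `r`-subsets of `[n]`. -/
def IsSignotope (n r : ℕ) (σ : Finset ℕ → Bool) : Prop :=
  (∀ A, σ A = true → A ⊆ Finset.Icc 1 n ∧ A.card = r) ∧
  ∀ X : Finset ℕ, X ⊆ Finset.Icc 1 n → X.card = r + 1 →
    signChanges ((X.sort (· ≤ ·)).map fun x => σ (X.erase x)) ≤ 1

/-- A `d`-co-signotope on `[n]`: every `(τ,B,i)`-series has at most one sign change. -/
def IsCoSignotope (n d : ℕ) (τ : Finset ℕ → Bool) : Prop :=
  (∀ A, τ A = true → A ⊆ Finset.Icc 1 n ∧ A.card = d) ∧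
  ∀ B : Finset ℕ, B ⊆ Finset.Icc 1 n → B.card = d → ∀ b ∈ B,
    signChanges (series n τ (B.erase b)) ≤ 1

/-- `𝒮_p(n,r)`: `r`-signotopes on `[n]` with exactly `p` `+`-signs. -/
noncomputable def sigSet (n r p : ℕ) : Set (Finset ℕ → Bool) :=
  {σ | IsSignotope n r σ ∧ plusCount σ = p}

/-- `𝒮_{≤p}(n,r)`. -/
noncomputable def sigSetLe (n r p : ℕ) : Set (Finset ℕ → Bool) :=
  {σ | IsSignotope n r σ ∧ plusCount σ ≤ p}

/-- `𝒮̄_p(n,d)`: `d`-co-signotopes on `[n]` with exactly `p` `+`-subsets. -/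
noncomputable def coSigSet (n d p : ℕ) : Set (Finset ℕ → Bool) :=
  {τ | IsCoSignotope n d τ ∧ plusCount τ = p}

/-- `𝒮̄_{≤p}(n,d)`. -/
noncomputable def coSigSetLe (n d p : ℕ) : Set (Finset ℕ → Bool) :=
  {τ | IsCoSignotope n d τ ∧ plusCount τ ≤ p}

/-- `σ` and `τ` differ by a single step: `σ⁻¹(+) ⊊ τ⁻¹(+)` and `|τ⁻¹(+)| = |σ⁻¹(+)| + 1`. -/
noncomputable def SingleStep (σ τ : Finset ℕ → Bool) : Prop :=
  {A | σ A = true} ⊂ {A | τ A = true} ∧ plusCount τ = plusCount σ + 1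

/-- The higher Bruhat order on `r`-signotopes on `[n]`: reflexive-transitive closure of
the single step relation. -/
noncomputable def BruhatLe (n r : ℕ) (σ τ : Finset ℕ → Bool) : Prop :=
  Relation.ReflTransGen (fun a b => IsSignotope n r a ∧ IsSignotope n r b ∧ SingleStep a b) σ τ

/-- The complementary higher Bruhat order on `d`-co-signotopes on `[n]`. -/
noncomputable def CoBruhatLe (n d : ℕ) (σ τ : Finset ℕ → Bool) : Prop :=
  Relation.ReflTransGen (fun a b => IsCoSignotope n d a ∧ IsCoSignotope n d b ∧ SingleStep a b) σ τ

/-- Adjacency in the graph `G_{n,d}`: `B' = (B \ {x}) ∪ {y}` with no element of `B \ {x}`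
strictly between `x` and `y`. -/
def GAdj (n d : ℕ) (B B' : Finset ℕ) : Prop :=
  B ⊆ Finset.Icc 1 n ∧ B.card = d ∧ B' ⊆ Finset.Icc 1 n ∧ B'.card = d ∧
  ∃ x ∈ B, ∃ y ∈ Finset.Icc 1 n, y ∉ B ∧ B' = insert y (B.erase x) ∧
    ∀ z ∈ B.erase x, ¬(min x y < z ∧ z < max x y)

/-- The source subset `S_{n,d,i} = {1,…,i} ∪ {n-d+i+1,…,n}`. -/
def sourceSubset (n d i : ℕ) : Finset ℕ :=
  Finset.Icc 1 i ∪ Finset.Icc (n - d + i + 1) n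

/-- Connectivity inside the `+`-subsets of `τ` (the induced subgraph `G_{n,d}[τ]`). -/
def plusConn (n d : ℕ) (τ : Finset ℕ → Bool) : Finset ℕ → Finset ℕ → Prop :=
  Relation.ReflTransGen fun A A' => τ A = true ∧ τ A' = true ∧ GAdj n d A A'

/-- The vertex set `𝒞^τ_i` of the `+`-component of `τ` containing `S_{n,d,i}`
(empty if `S_{n,d,i}` is not a `+`-subset). -/
def comp (n d : ℕ) (τ : Finset ℕ → Bool) (i : ℕ) : Set (Finset ℕ) :=
  {B | τ (sourceSubset n d i) = true ∧ τ B = true ∧ plusConn n d τ (sourceSubset n d i) B}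

/-- The `j`-th smallest element (1-based) of a finite set of naturals. -/
def nthElt (B : Finset ℕ) (j : ℕ) : ℕ := (B.sort (· ≤ ·)).getD (j - 1) 0

/-- `b_j` with the conventions `b_0 = 0` and `b_{d+1} = n+1` (as an integer). -/
def extNth (n d : ℕ) (B : Finset ℕ) (j : ℕ) : ℤ :=
  if j = 0 then 0 else if j ≤ d then (nthElt B j : ℤ) else (n : ℤ) + 1

/-- A series is left-aligned if it starts with `+` and ends with `-`. -/
def LeftAligned (l : List Bool) : Prop :=
  l.head? = some true ∧ l.getLast? = some false

/-- A series is right-aligned if it starts with `-` and ends with `+`. -/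
def RightAligned (l : List Bool) : Prop :=
  l.head? = some false ∧ l.getLast? = some true

/-- `𝒮̄_{p,i}(n,d)`: co-signotopes in `𝒮̄_p(n,d)` whose only nonempty `+`-component
is `𝒞^τ_i` (i.e. every `+`-subset lies in `𝒞^τ_i`). -/
noncomputable def coSigOnly (n d p i : ℕ) : Set (Finset ℕ → Bool) :=
  {τ | IsCoSignotope n d τ ∧ plusCount τ = p ∧ ∀ B, τ B = true → B ∈ comp n d τ i}

/-- `Z(d,i)`: points `(a_1,…,a_d) ∈ ℤ_{>0}^d` (0-indexed in Lean) with `a_j ≥ a_{j-1}`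
for `j ∈ [2,i]` and `a_j ≥ a_{j+1}` for `j ∈ [i+1,d-1]` (1-based indices). -/
def ZSet (d i : ℕ) : Set (Fin d → ℤ) :=
  {a | (∀ j, 0 < a j) ∧
    (∀ j k : Fin d, (j : ℕ) + 1 = (k : ℕ) → (k : ℕ) + 1 ≤ i → a j ≤ a k) ∧
    (∀ j k : Fin d, (j : ℕ) + 1 = (k : ℕ) → i ≤ (j : ℕ) → a k ≤ a j)}

/-- A `(d,i)`-Ferrers diagram with respect to `p`. -/
def IsFerrers (d i p : ℕ) (F : Set (Fin d → ℤ)) : Prop :=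
  F ⊆ ZSet d i ∧ F.ncard = p ∧
  ∀ a ∈ F, ∀ a' ∈ ZSet d i, (∀ j, a' j ≤ a j) → a' ∈ F

/-- The number of `(d,i)`-Ferrers diagrams with respect to `p`. -/
noncomputable def ferrersCount (d i p : ℕ) : ℕ :=
  {F : Set (Fin d → ℤ) | IsFerrers d i p F}.ncard

/-- `f_{n,d,i,j}` (here `j` is the 1-based coordinate index). -/
def fFun (n d i j : ℕ) (x : ℕ) : ℤ :=
  if j ≤ i then (x : ℤ) - j + 1 else ((n : ℤ) - x) - ((d : ℤ) - j) + 1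

/-- `g_{n,d,i}` maps a `d`-subset `B = (b_1 < … < b_d)` to
`(f_{n,d,i,1}(b_1), …, f_{n,d,i,d}(b_d))`. -/
def gMap (n d i : ℕ) (B : Finset ℕ) : Fin d → ℤ :=
  fun k => fFun n d i ((k : ℕ) + 1) (nthElt B ((k : ℕ) + 1))

/-- A sparse composition of `p` of length `d+1`. -/
def IsSparseComposition (d p : ℕ) (c : Fin (d + 1) → ℕ) : Prop :=
  (∑ i, c i) = p ∧
  ∀ i : Fin (d + 1), 1 ≤ (i : ℕ) →
    c i = 0 ∨ c ⟨(i : ℕ) - 1, lt_of_le_of_lt (Nat.sub_le _ _) i.isLt⟩ = 0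

/-- The component `τ_i` of the `+`-component decomposition `Δ(τ)`:
the sign function whose `+`-set is `𝒞^τ_i`. -/
noncomputable def compFun (n d : ℕ) (τ : Finset ℕ → Bool) (i : ℕ) : Finset ℕ → Bool :=
  ofPlusSet (comp n d τ i)

/-- Keep the `i` smallest elements of `B` and shift the others by `ñ - n`
(this is `g⁻¹_{ñ,d,i} ∘ g_{n,d,i}` on `d`-subsets). -/
def gammaSet (n tn i : ℕ) (B : Finset ℕ) : Finset ℕ :=
  ((B.sort (· ≤ ·)).mapIdx fun k x => if k < i then x else x + tn - n).toFinset

/-- The map `h_{n,ñ,d,p,i}` on sign functions. -/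
noncomputable def hFun (n tn i : ℕ) (τ : Finset ℕ → Bool) : Finset ℕ → Bool :=
  ofPlusSet {A | ∃ B, τ B = true ∧ A = gammaSet n tn i B}

open Classical in
/-- `γ_{τ,ñ}(B)`: replace `b_j` by `b_j + ñ - n` whenever the `(τ,B,j)`-series is
right-aligned. -/
noncomputable def gammaFun (n tn : ℕ) (τ : Finset ℕ → Bool) (B : Finset ℕ) : Finset ℕ :=
  B.image fun x => if RightAligned (series n τ (B.erase x)) then x + tn - n else x

/-- The simple bijection `φ_{n,ñ,d,p}` on sign functions. -/
noncomputable def phiFun (n tn : ℕ) (τ : Finset ℕ → Bool) : Finset ℕ → Bool :=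
  ofPlusSet {A | ∃ B, τ B = true ∧ A = gammaFun n tn τ B}

/-!
For a base, i.e. a `(d-1)`-set `C ⊆ [n]` with a `+`-extension, the `τ`-series of `C` has at most
one sign change and, having `n - d + 1 > p` entries, contains a `-`: it is right- or left-aligned,
and its `+`-entries fill a final or an initial segment of `[n] \ C`. Counting the `+`-subsets
forced in this way against `p ≤ n - d` shows that in a `+`-subset the right-aligned slots lie
above the left-aligned ones, that the alignment of a slot of `C` does not depend on the extension,
and that `γ` is strictly monotone on every `+`-subset. The harder consequence is that two
`+`-subsets whose images under `γ` share `d - 1` elements contain the same base `C`. Hence the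
`φ(τ)`-series of `γ(C)` is the `τ`-series of `C`, moved by `γ` and padded with `-`: `φ(τ)` is a
co-signotope with the same alignments, and `φ_{ñ,n} ∘ φ_{n,ñ}` is the identity. Alignments only
grow with `τ`, so `φ` maps single steps to single steps.
-/

open Finset

theorem signChanges_cons_cons (a b : Bool) (l : List Bool) :
    signChanges (a :: b :: l) = (if a = b then 0 else 1) + signChanges (b :: l) := by
  by_cases h : a = b <;> simp [signChanges, h, Nat.add_comm]

theorem signChanges_le_cons (a : Bool) (l : List Bool) : signChanges l ≤ signChanges (a :: l) := by
  cases l with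
  | nil => simp [signChanges]
  | cons b l => rw [signChanges_cons_cons]; omega

theorem eq_of_mem_of_signChanges_eq_zero {a b : Bool} {l : List Bool}
    (h : signChanges (a :: l) = 0) (hb : b ∈ a :: l) : b = a := by
  induction l generalizing a with
  | nil => simpa using hb
  | cons c l ih =>
    rw [signChanges_cons_cons] at h
    have hac : a = c := by by_contra hac; simp [hac] at h
    subst hac
    rcases List.mem_cons.1 hb with rfl | hb
    · rfl
    · exact ih (by omega) hb

theorem getElem?_eq_of_signChanges_le_one {l : List Bool} (hl : signChanges l ≤ 1)
    {i j k : ℕ} {b : Bool} (hij : i < j) (hjk : j < k) (hi : l[i]? = some b)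
    (hk : l[k]? = some b) : l[j]? = some b := by
  induction l generalizing i j k with
  | nil => simp at hi
  | cons a l ih =>
    have htail : signChanges l ≤ 1 := (signChanges_le_cons a l).trans hl
    obtain ⟨j, rfl⟩ : ∃ j', j = j' + 1 := ⟨j - 1, by omega⟩
    obtain ⟨k, rfl⟩ : ∃ k', k = k' + 1 := ⟨k - 1, by omega⟩
    simp only [List.getElem?_cons_succ] at hk ⊢
    cases i with
    | succ i => exact ih htail (i := i) (by omega) (by omega) (by simpa using hi) hk
    | zero =>
      simp only [List.getElem?_cons_zero, Option.some_inj] at hi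
      subst hi
      cases l with
      | nil => simp at hk
      | cons c l =>
        by_cases hca : c = a
        · subst hca
          cases j with
          | zero => simp
          | succ j => exact ih htail (i := 0) (by omega) (by omega) (by simp) hk
        · rw [signChanges_cons_cons, if_neg (Ne.symm hca)] at hl
          exact absurd (eq_of_mem_of_signChanges_eq_zero (by omega)
            (List.mem_of_getElem? hk)) (Ne.symm hca)

theorem exists_getElem?_eq_not_of_signChanges_pos {a : Bool} {l : List Bool}
    (h : 0 < signChanges (a :: l)) : ∃ k : ℕ, (a :: l)[k]? = some (!a) := by
  induction l generalizing a with
  | nil => simp [signChanges] at h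
  | cons c l ih =>
    rw [signChanges_cons_cons] at h
    by_cases hac : a = c
    · subst hac
      obtain ⟨k, hk⟩ := ih (by simpa using h)
      exact ⟨k + 1, by simpa using hk⟩
    · exact ⟨1, by cases a <;> cases c <;> simp_all⟩

theorem exists_alternating_of_one_lt_signChanges {l : List Bool} (h : 1 < signChanges l) :
    ∃ (i j k : ℕ) (b : Bool),
      i < j ∧ j < k ∧ l[i]? = some b ∧ l[j]? = some (!b) ∧ l[k]? = some b := by
  induction l with
  | nil => simp [signChanges] at h
  | cons a l ih =>
    cases l with
    | nil => simp [signChanges] at h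
    | cons c l =>
      rw [signChanges_cons_cons] at h
      by_cases hac : a = c
      · subst hac
        obtain ⟨i, j, k, b, hij, hjk, hi, hj, hk⟩ := ih (by simpa using h)
        exact ⟨i + 1, j + 1, k + 1, b, by omega, by omega, hi, hj, hk⟩
      · rw [if_neg hac] at h
        obtain ⟨k, hk⟩ := exists_getElem?_eq_not_of_signChanges_pos (a := c) (l := l) (by omega)
        have hca : (!c) = a := by cases a <;> cases c <;> simp_all
        have hk0 : k ≠ 0 := by rintro rfl; cases c <;> simp at hk
        refine ⟨0, 1, k + 1, a, by omega, by omega, by simp, ?_, ?_⟩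
        · simp [← hca]
        · simpa [hca] using hk

theorem signChanges_le_one_iff {l : List Bool} :
    signChanges l ≤ 1 ↔ ∀ ⦃i j k : ℕ⦄ ⦃b : Bool⦄, i < j → j < k →
      l[i]? = some b → l[k]? = some b → l[j]? = some b := by
  refine ⟨fun hl _ _ _ _ => getElem?_eq_of_signChanges_le_one hl, fun h => ?_⟩
  by_contra hl
  obtain ⟨i, j, k, b, hij, hjk, hi, hj, hk⟩ :=
    exists_alternating_of_one_lt_signChanges (l := l) (by omega)
  cases b <;> simp_all [h hij hjk hi hk]

theorem signChanges_map_sort_le_one_iff {s : Finset ℕ} {f : ℕ → Bool} :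
    signChanges ((s.sort (· ≤ ·)).map f) ≤ 1 ↔
      ∀ a ∈ s, ∀ b ∈ s, ∀ c ∈ s, a < b → b < c → f a = f c → f b = f a := by
  have hmono := (sortedLT_sort s).strictMono_get
  have idx : ∀ a ∈ s, ∃ i, (s.sort (· ≤ ·))[i]? = some a := fun a ha =>
    List.mem_iff_getElem?.1 ((mem_sort _).2 ha)
  have lt_iff : ∀ {i j a b : ℕ}, (s.sort (· ≤ ·))[i]? = some a → (s.sort (· ≤ ·))[j]? = some b →
      (i < j ↔ a < b) := by
    intro i j a b hi hj
    obtain ⟨hi', rfl⟩ := List.getElem?_eq_some_iff.1 hi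
    obtain ⟨hj', rfl⟩ := List.getElem?_eq_some_iff.1 hj
    exact (hmono.lt_iff_lt (a := ⟨i, hi'⟩) (b := ⟨j, hj'⟩)).symm
  rw [signChanges_le_one_iff]
  constructor
  · intro h a ha b hb c hc hab hbc habc
    obtain ⟨i, hi⟩ := idx a ha
    obtain ⟨j, hj⟩ := idx b hb
    obtain ⟨k, hk⟩ := idx c hc
    have := h (b := f a) ((lt_iff hi hj).2 hab) ((lt_iff hj hk).2 hbc)
      (by simp [List.getElem?_map, hi]) (by simp [List.getElem?_map, hk, habc])
    simpa [List.getElem?_map, hj] using this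
  · intro h i j k v hij hjk hi hk
    simp only [List.getElem?_map, Option.map_eq_some_iff] at hi hk ⊢
    obtain ⟨a, hai, rfl⟩ := hi
    obtain ⟨c, hck, hfc⟩ := hk
    obtain ⟨b, hbj⟩ : ∃ b, (s.sort (· ≤ ·))[j]? = some b :=
      ⟨_, List.getElem?_eq_getElem (hjk.trans (List.getElem?_eq_some_iff.1 hck).1)⟩
    have mem : ∀ {i x}, (s.sort (· ≤ ·))[i]? = some x → x ∈ s := fun h =>
      (mem_sort _).1 (List.mem_of_getElem? h)
    exact ⟨b, hbj, h a (mem hai) b (mem hbj) c (mem hck) ((lt_iff hai hbj).1 hij)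
      ((lt_iff hbj hck).1 hjk) hfc.symm⟩

theorem card_Icc_sdiff_erase_add_card_filter_gt {n x : ℕ} {B : Finset ℕ} (hB : B ⊆ Icc 1 n) :
    #(Icc x n \ B.erase x) + #{b ∈ B | x < b} = n + 1 - x := by
  have : Icc x n ∩ B.erase x = {b ∈ B | x < b} := by
    ext b
    simp only [mem_inter, mem_Icc, mem_erase, mem_filter]
    constructor
    · rintro ⟨⟨hxb, -⟩, hbx, hb⟩; exact ⟨hb, lt_of_le_of_ne hxb (Ne.symm hbx)⟩
    · rintro ⟨hb, hxb⟩; exact ⟨⟨hxb.le, (mem_Icc.1 (hB hb)).2⟩, hxb.ne', hb⟩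
  rw [← this, card_sdiff_add_card_inter, Nat.card_Icc]

theorem card_Icc_sdiff_erase_add_card_filter_lt {n x : ℕ} {B : Finset ℕ} (hB : B ⊆ Icc 1 n) :
    #(Icc 1 x \ B.erase x) + #{b ∈ B | b < x} = x := by
  have : Icc 1 x ∩ B.erase x = {b ∈ B | b < x} := by
    ext b
    simp only [mem_inter, mem_Icc, mem_erase, mem_filter]
    constructor
    · rintro ⟨⟨-, hbx⟩, hne, hb⟩; exact ⟨hb, lt_of_le_of_ne hbx hne⟩
    · rintro ⟨hb, hbx⟩; exact ⟨⟨(mem_Icc.1 (hB hb)).1, hbx.le⟩, hbx.ne, hb⟩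
  rw [← this, card_sdiff_add_card_inter, Nat.card_Icc, Nat.add_sub_cancel]

theorem card_filter_lt_add_card_filter_gt {B : Finset ℕ} {x : ℕ} (hx : x ∈ B) :
    #{b ∈ B | b < x} + #{b ∈ B | x < b} + 1 = #B := by
  have : {b ∈ B | ¬ b < x} = insert x {b ∈ B | x < b} := by
    ext b
    simp only [mem_filter, mem_insert, not_lt]
    constructor
    · rintro ⟨hb, hxb⟩; rcases hxb.eq_or_lt with rfl | h <;> simp_all
    · rintro (rfl | ⟨hb, hxb⟩)
      exacts [⟨hx, le_rfl⟩, ⟨hb, hxb.le⟩]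
  have h := card_filter_add_card_filter_not (s := B) (fun b => b < x)
  rw [this, card_insert_of_notMem (by simp)] at h
  omega

theorem card_filter_insert_le (s : Finset ℕ) (a : ℕ) (q : ℕ → Prop) [DecidablePred q] :
    #{b ∈ insert a s | q b} ≤ #{b ∈ s | q b} + if q a then 1 else 0 := by
  rw [filter_insert]
  split_ifs
  exacts [card_insert_le _ _, le_rfl]

theorem card_filter_image_lt_of_strictMonoOn {s : Finset ℕ} {f : ℕ → ℕ}
    (hf : StrictMonoOn f s) {x : ℕ} (hx : x ∈ s) :
    #{y ∈ s.image f | y < f x} = #{b ∈ s | b < x} := by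
  rw [filter_image, card_image_of_injOn (hf.injOn.mono (coe_subset.2 (filter_subset _ s)))]
  exact congrArg card (filter_congr fun b hb => hf.lt_iff_lt hb hx)

theorem card_filter_image_gt_of_strictMonoOn {s : Finset ℕ} {f : ℕ → ℕ}
    (hf : StrictMonoOn f s) {x : ℕ} (hx : x ∈ s) :
    #{y ∈ s.image f | f x < y} = #{b ∈ s | x < b} := by
  rw [filter_image, card_image_of_injOn (hf.injOn.mono (coe_subset.2 (filter_subset _ s)))]
  exact congrArg card (filter_congr fun b hb => hf.lt_iff_lt hx hb)

theorem signChanges_series_le_one_iff {n : ℕ} {τ : Finset ℕ → Bool} {C : Finset ℕ} :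
    signChanges (series n τ C) ≤ 1 ↔ ∀ a ∈ Icc 1 n \ C, ∀ b ∈ Icc 1 n \ C, ∀ c ∈ Icc 1 n \ C,
      a < b → b < c → τ (insert a C) = τ (insert c C) → τ (insert b C) = τ (insert a C) :=
  signChanges_map_sort_le_one_iff

theorem series_head? {n : ℕ} {τ : Finset ℕ → Bool} {C : Finset ℕ} (h : (Icc 1 n \ C).Nonempty) :
    (series n τ C).head? = some (τ (insert ((Icc 1 n \ C).min' h) C)) := by
  have hlen : 0 < ((Icc 1 n \ C).sort (· ≤ ·)).length := by
    rw [length_sort]; exact card_pos.2 h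
  rw [series, List.head?_map, List.head?_eq_getElem?, List.getElem?_eq_getElem hlen,
    sorted_zero_eq_min']
  rfl

theorem series_getLast? {n : ℕ} {τ : Finset ℕ → Bool} {C : Finset ℕ}
    (h : (Icc 1 n \ C).Nonempty) :
    (series n τ C).getLast? = some (τ (insert ((Icc 1 n \ C).max' h) C)) := by
  have hlen : 0 < ((Icc 1 n \ C).sort (· ≤ ·)).length := by
    rw [length_sort]; exact card_pos.2 h
  rw [series, List.getLast?_map, List.getLast?_eq_getElem?,
    List.getElem?_eq_getElem (by omega), sorted_last_eq_max']
  rfl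

theorem RightAligned.not_leftAligned {l : List Bool} (h : RightAligned l) : ¬ LeftAligned l :=
  fun h' => by simpa [h.1] using h'.1

open Classical in
/-- `γ_{τ,ñ}` moves the element `y` of a `+`-subset `insert y C` to `alignShift n tn τ C y`;
the subtraction never truncates there, by `add_two_le_of_rightAligned`. -/
noncomputable def alignShift (n tn : ℕ) (τ : Finset ℕ → Bool) (C : Finset ℕ) (y : ℕ) : ℕ :=
  if RightAligned (series n τ C) then y + tn - n else y

noncomputable def gammaAt (n tn : ℕ) (τ : Finset ℕ → Bool) (B : Finset ℕ) (x : ℕ) : ℕ :=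
  alignShift n tn τ (B.erase x) x

section GammaFun

variable {n tn d p : ℕ} {τ : Finset ℕ → Bool} {B C : Finset ℕ} {x y : ℕ}

theorem gammaFun_eq_image : gammaFun n tn τ B = B.image (gammaAt n tn τ B) := rfl

theorem alignShift_of_rightAligned (h : RightAligned (series n τ C)) :
    alignShift n tn τ C y = y + tn - n := by
  simp [alignShift, h]

theorem alignShift_of_not_rightAligned (h : ¬ RightAligned (series n τ C)) :
    alignShift n tn τ C y = y := by
  simp [alignShift, h]

theorem gammaAt_insert (hy : y ∉ C) : gammaAt n tn τ (insert y C) y = alignShift n tn τ C y := by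
  rw [gammaAt, erase_insert hy]

theorem phiFun_eq_true_iff {A : Finset ℕ} :
    phiFun n tn τ A = true ↔ ∃ B, τ B = true ∧ A = gammaFun n tn τ B := by
  unfold phiFun ofPlusSet
  split_ifs with h <;> simpa using h

theorem gammaAt_mem_gammaFun (hx : x ∈ B) : gammaAt n tn τ B x ∈ gammaFun n tn τ B :=
  mem_image_of_mem _ hx

end GammaFun

namespace IsCoSignotope

section Alignment

variable {n d p : ℕ} {τ : Finset ℕ → Bool} {B C : Finset ℕ} {x y z : ℕ}

theorem subset_Icc (hτ : IsCoSignotope n d τ) {A : Finset ℕ} (hA : τ A = true) :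
    A ⊆ Icc 1 n :=
  (hτ.1 A hA).1

theorem card_eq (hτ : IsCoSignotope n d τ) {A : Finset ℕ} (hA : τ A = true) : #A = d :=
  (hτ.1 A hA).2

theorem card_le_plusCount (hτ : IsCoSignotope n d τ) {F : Finset (Finset ℕ)}
    (hF : ∀ A ∈ F, τ A = true) : #F ≤ plusCount τ := by
  have hfin : {A | τ A = true}.Finite :=
    (Icc 1 n).powerset.finite_toSet.subset fun A hA => mem_powerset.2 (hτ.subset_Icc hA)
  rw [← Set.ncard_coe_finset]
  exact Set.ncard_le_ncard (fun A hA => hF A hA) hfin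

theorem card_le_of_forall_insert (hτ : IsCoSignotope n d τ) (hp : plusCount τ ≤ p)
    {s : Finset ℕ} (hs : Disjoint s C) (h : ∀ x ∈ s, τ (insert x C) = true) : #s ≤ p := by
  have hinj : Set.InjOn (insert · C) s := fun a ha b _ hab =>
    (insert_inj (disjoint_left.1 hs ha)).1 hab
  rw [← card_image_of_injOn hinj]
  exact (hτ.card_le_plusCount (by simpa using h)).trans hp

theorem base_of_plus (hτ : IsCoSignotope n d τ) (hxC : x ∉ C) (hx : τ (insert x C) = true) :
    C ⊆ Icc 1 n ∧ #C + 1 = d ∧ x ∈ Icc 1 n \ C := by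
  have hsub := hτ.subset_Icc hx
  refine ⟨(subset_insert x C).trans hsub, ?_, mem_sdiff.2 ⟨hsub (mem_insert_self x C), hxC⟩⟩
  rw [← card_insert_of_notMem hxC, hτ.card_eq hx]

theorem signChanges_series_le_one (hτ : IsCoSignotope n d τ) (hC : C ⊆ Icc 1 n)
    (hCd : #C + 1 = d) : signChanges (series n τ C) ≤ 1 := by
  obtain hempty | ⟨a, ha⟩ := (Icc 1 n \ C).eq_empty_or_nonempty
  · simp [series, hempty, signChanges]
  obtain ⟨haI, haC⟩ := mem_sdiff.1 ha
  simpa [erase_insert haC] using hτ.2 (insert a C) (insert_subset haI hC)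
    (by rw [card_insert_of_notMem haC, hCd]) a (mem_insert_self a C)

theorem apply_insert_eq_of_le_of_le (hτ : IsCoSignotope n d τ) (hC : C ⊆ Icc 1 n)
    (hCd : #C + 1 = d) {a b c : ℕ} (ha : a ∈ Icc 1 n \ C) (hb : b ∈ Icc 1 n \ C)
    (hc : c ∈ Icc 1 n \ C) (hab : a ≤ b) (hbc : b ≤ c) (h : τ (insert a C) = τ (insert c C)) :
    τ (insert b C) = τ (insert a C) := by
  rcases hab.eq_or_lt with rfl | hab
  · rfl
  rcases hbc.eq_or_lt with rfl | hbc
  · exact h.symm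
  exact signChanges_series_le_one_iff.1 (hτ.signChanges_series_le_one hC hCd) a ha b hb c hc
    hab hbc h

/-- A base has more extensions than there are `+`-subsets. -/
theorem exists_apply_insert_eq_false (hτ : IsCoSignotope n d τ) (hp : plusCount τ ≤ p)
    (hpn : p + d ≤ n) (hC : C ⊆ Icc 1 n) (hCd : #C + 1 = d) :
    ∃ y ∈ Icc 1 n \ C, τ (insert y C) = false := by
  by_contra! h
  have := hτ.card_le_of_forall_insert hp sdiff_disjoint (fun y hy => by simpa using h y hy)
  rw [card_sdiff_of_subset hC, Nat.card_Icc] at this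
  omega

theorem rightAligned_or_leftAligned (hτ : IsCoSignotope n d τ) (hp : plusCount τ ≤ p)
    (hpn : p + d ≤ n) (hxC : x ∉ C) (hx : τ (insert x C) = true) :
    RightAligned (series n τ C) ∨ LeftAligned (series n τ C) := by
  obtain ⟨hC, hCd, hxdom⟩ := hτ.base_of_plus hxC hx
  have hne : (Icc 1 n \ C).Nonempty := ⟨x, hxdom⟩
  obtain ⟨y, hy, hyminus⟩ := hτ.exists_apply_insert_eq_false hp hpn hC hCd
  have between := hτ.apply_insert_eq_of_le_of_le hC hCd (min'_mem _ hne) (b := x) hxdom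
    (max'_mem _ hne) (min'_le _ _ hxdom) (le_max' _ _ hxdom)
  have between' := hτ.apply_insert_eq_of_le_of_le hC hCd (min'_mem _ hne) (b := y) hy
    (max'_mem _ hne) (min'_le _ _ hy) (le_max' _ _ hy)
  unfold RightAligned LeftAligned
  rw [series_head? hne, series_getLast? hne]
  cases hmin : τ (insert ((Icc 1 n \ C).min' hne) C) <;>
    cases hmax : τ (insert ((Icc 1 n \ C).max' hne) C) <;> simp_all

theorem rightAligned_iff (hτ : IsCoSignotope n d τ) (hp : plusCount τ ≤ p) (hpn : p + d ≤ n)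
    (hxC : x ∉ C) (hx : τ (insert x C) = true) (hne : (Icc 1 n \ C).Nonempty) :
    RightAligned (series n τ C) ↔ τ (insert ((Icc 1 n \ C).max' hne) C) = true := by
  refine ⟨fun h => by simpa [series_getLast? hne] using h.2, fun h => ?_⟩
  refine (hτ.rightAligned_or_leftAligned hp hpn hxC hx).resolve_right fun hLA => ?_
  simpa [series_getLast? hne, h] using hLA.2

theorem leftAligned_iff (hτ : IsCoSignotope n d τ) (hp : plusCount τ ≤ p) (hpn : p + d ≤ n)
    (hxC : x ∉ C) (hx : τ (insert x C) = true) (hne : (Icc 1 n \ C).Nonempty) :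
    LeftAligned (series n τ C) ↔ τ (insert ((Icc 1 n \ C).min' hne) C) = true := by
  refine ⟨fun h => by simpa [series_head? hne] using h.1, fun h => ?_⟩
  refine (hτ.rightAligned_or_leftAligned hp hpn hxC hx).resolve_left fun hRA => ?_
  simpa [series_head? hne, h] using hRA.1

theorem leftAligned_of_not_rightAligned (hτ : IsCoSignotope n d τ) (hp : plusCount τ ≤ p)
    (hpn : p + d ≤ n) (hxC : x ∉ C) (hx : τ (insert x C) = true)
    (h : ¬ RightAligned (series n τ C)) : LeftAligned (series n τ C) :=
  (hτ.rightAligned_or_leftAligned hp hpn hxC hx).resolve_left h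

theorem leftAligned_erase_of_not_rightAligned (hτ : IsCoSignotope n d τ) (hp : plusCount τ ≤ p)
    (hpn : p + d ≤ n) (hB : τ B = true) (hx : x ∈ B)
    (h : ¬ RightAligned (series n τ (B.erase x))) : LeftAligned (series n τ (B.erase x)) :=
  hτ.leftAligned_of_not_rightAligned hp hpn (notMem_erase x B) (by rwa [insert_erase hx]) h

theorem apply_insert_of_rightAligned (hτ : IsCoSignotope n d τ) (hxC : x ∉ C)
    (hx : τ (insert x C) = true) (hRA : RightAligned (series n τ C)) (hy : y ∈ Icc 1 n \ C)
    (hxy : x ≤ y) : τ (insert y C) = true := by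
  obtain ⟨hC, hCd, hxdom⟩ := hτ.base_of_plus hxC hx
  have hne : (Icc 1 n \ C).Nonempty := ⟨x, hxdom⟩
  have hmax : τ (insert ((Icc 1 n \ C).max' hne) C) = true := by
    simpa [series_getLast? hne] using hRA.2
  rw [hτ.apply_insert_eq_of_le_of_le hC hCd hxdom hy (max'_mem _ hne) hxy (le_max' _ _ hy)
    (hx.trans hmax.symm), hx]

theorem apply_insert_of_leftAligned (hτ : IsCoSignotope n d τ) (hxC : x ∉ C)
    (hx : τ (insert x C) = true) (hLA : LeftAligned (series n τ C)) (hy : y ∈ Icc 1 n \ C)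
    (hyx : y ≤ x) : τ (insert y C) = true := by
  obtain ⟨hC, hCd, hxdom⟩ := hτ.base_of_plus hxC hx
  have hne : (Icc 1 n \ C).Nonempty := ⟨x, hxdom⟩
  have hmin : τ (insert ((Icc 1 n \ C).min' hne) C) = true := by
    simpa [series_head? hne] using hLA.1
  rw [hτ.apply_insert_eq_of_le_of_le hC hCd (min'_mem _ hne) hy hxdom (min'_le _ _ hy) hyx
    (hmin.trans hx.symm), hmin]

theorem mem_Icc_sdiff_of_plus (hτ : IsCoSignotope n d τ) (hCd : #C + 1 = d)
    (h : τ (insert z C) = true) : z ∈ Icc 1 n \ C := by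
  refine mem_sdiff.2 ⟨hτ.subset_Icc h (mem_insert_self z C), fun hz => ?_⟩
  have := hτ.card_eq h
  rw [insert_eq_of_mem hz] at this
  omega

/-- Two families of `+`-subsets `insert u D₁` (`u ≥ r`) and `insert v D₃` (`v ≤ l`) share at
most the set `D₁ ∪ D₃`, and only when `D₁` and `D₃` differ by one element on each side. -/
theorem card_add_card_le_of_forall_insert (hτ : IsCoSignotope n d τ) (hp : plusCount τ ≤ p)
    {D₁ D₃ : Finset ℕ} (hD : D₁ ≠ D₃) {r l : ℕ}
    (hup : ∀ u ∈ Icc r n \ D₁, τ (insert u D₁) = true)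
    (hdown : ∀ v ∈ Icc 1 l \ D₃, τ (insert v D₃) = true) :
    #(Icc r n \ D₁) + #(Icc 1 l \ D₃) ≤ p ∨
      (#(Icc r n \ D₁) + #(Icc 1 l \ D₃) ≤ p + 1 ∧
        ∃ u ∈ D₃ \ D₁, r ≤ u ∧ ∃ v ∈ D₁ \ D₃, v ≤ l) := by
  set F₁ := (Icc r n \ D₁).image (insert · D₁)
  set F₃ := (Icc 1 l \ D₃).image (insert · D₃)
  have hcard : ∀ {s D : Finset ℕ}, Disjoint s D → #(s.image (insert · D)) = #s :=
    fun hs => card_image_of_injOn fun a ha b _ hab => (insert_inj (disjoint_left.1 hs ha)).1 hab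
  have hunion : #(F₁ ∪ F₃) ≤ p := by
    refine (hτ.card_le_plusCount fun A hA => ?_).trans hp
    simp only [F₁, F₃, mem_union, mem_image] at hA
    obtain ⟨u, hu, rfl⟩ | ⟨v, hv, rfl⟩ := hA
    exacts [hup u hu, hdown v hv]
  have key := card_union_add_card_inter F₁ F₃
  rw [hcard sdiff_disjoint, hcard sdiff_disjoint] at key
  obtain hempty | ⟨A, hA⟩ := (F₁ ∩ F₃).eq_empty_or_nonempty
  · left
    rw [hempty, card_empty] at key
    omega
  right
  have shared : ∀ A ∈ F₁ ∩ F₃, A = D₁ ∪ D₃ ∧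
      ∃ u ∈ D₃ \ D₁, r ≤ u ∧ ∃ v ∈ D₁ \ D₃, v ≤ l := by
    intro A hA
    simp only [F₁, F₃, mem_inter, mem_image, mem_sdiff, mem_Icc] at hA
    obtain ⟨⟨u, ⟨⟨hru, -⟩, huD₁⟩, rfl⟩, ⟨v, ⟨⟨-, hvl⟩, hvD₃⟩, hA⟩⟩ := hA
    have huv : u ≠ v := by
      rintro rfl
      exact hD (by rw [← erase_insert huD₁, ← hA, erase_insert hvD₃])
    have huD₃ : u ∈ D₃ := by
      have : u ∈ insert v D₃ := by rw [hA]; exact mem_insert_self u D₁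
      simpa [huv] using this
    have hvD₁ : v ∈ D₁ := by
      have : v ∈ insert u D₁ := by rw [← hA]; exact mem_insert_self v D₃
      simpa [huv.symm] using this
    refine ⟨?_, u, mem_sdiff.2 ⟨huD₃, huD₁⟩, hru, v, mem_sdiff.2 ⟨hvD₁, hvD₃⟩, hvl⟩
    refine Subset.antisymm (insert_subset (mem_union_right _ huD₃) subset_union_left) ?_
    exact union_subset (subset_insert _ _) (hA ▸ subset_insert v D₃)
  have hinter : #(F₁ ∩ F₃) ≤ 1 :=
    card_le_one.2 fun A hA A' hA' => (shared A hA).1.trans (shared A' hA').1.symm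
  exact ⟨by omega, (shared A hA).2⟩

theorem apply_insert_erase_of_rightAligned (hτ : IsCoSignotope n d τ) (hB : τ B = true)
    (hx : x ∈ B) (hRA : RightAligned (series n τ (B.erase x))) {y : ℕ}
    (hy : y ∈ Icc x n \ B.erase x) : τ (insert y (B.erase x)) = true := by
  obtain ⟨hyI, hyB⟩ := mem_sdiff.1 hy
  have hx1 := (mem_Icc.1 (hτ.subset_Icc hB hx)).1
  refine hτ.apply_insert_of_rightAligned (notMem_erase x B) (by rwa [insert_erase hx]) hRA
    (mem_sdiff.2 ⟨?_, hyB⟩) (mem_Icc.1 hyI).1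
  exact mem_Icc.2 ⟨hx1.trans (mem_Icc.1 hyI).1, (mem_Icc.1 hyI).2⟩

theorem apply_insert_erase_of_leftAligned (hτ : IsCoSignotope n d τ) (hB : τ B = true)
    (hx : x ∈ B) (hLA : LeftAligned (series n τ (B.erase x))) {y : ℕ}
    (hy : y ∈ Icc 1 x \ B.erase x) : τ (insert y (B.erase x)) = true := by
  obtain ⟨hyI, hyB⟩ := mem_sdiff.1 hy
  have hxn := (mem_Icc.1 (hτ.subset_Icc hB hx)).2
  refine hτ.apply_insert_of_leftAligned (notMem_erase x B) (by rwa [insert_erase hx]) hLA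
    (mem_sdiff.2 ⟨?_, hyB⟩) (mem_Icc.1 hyI).2
  exact mem_Icc.2 ⟨(mem_Icc.1 hyI).1, (mem_Icc.1 hyI).2.trans hxn⟩

theorem add_two_le_of_rightAligned (hτ : IsCoSignotope n d τ) (hp : plusCount τ ≤ p)
    (hB : τ B = true) (hx : x ∈ B) (hRA : RightAligned (series n τ (B.erase x))) :
    n + 2 ≤ x + p + d := by
  have hcount := hτ.card_le_of_forall_insert hp sdiff_disjoint
    fun y hy => hτ.apply_insert_erase_of_rightAligned hB hx hRA hy
  have h₁ := card_Icc_sdiff_erase_add_card_filter_gt (x := x) (hτ.subset_Icc hB)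
  have h₂ := card_filter_lt_add_card_filter_gt hx
  have := (mem_Icc.1 (hτ.subset_Icc hB hx)).2
  rw [hτ.card_eq hB] at h₂
  omega

theorem lt_of_leftAligned (hτ : IsCoSignotope n d τ) (hp : plusCount τ ≤ p) (hB : τ B = true)
    (hx : x ∈ B) (hLA : LeftAligned (series n τ (B.erase x))) : x < p + d := by
  have hcount := hτ.card_le_of_forall_insert hp sdiff_disjoint
    fun y hy => hτ.apply_insert_erase_of_leftAligned hB hx hLA hy
  have h₁ := card_Icc_sdiff_erase_add_card_filter_lt (x := x) (hτ.subset_Icc hB)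
  have h₂ := card_filter_lt_add_card_filter_gt hx
  rw [hτ.card_eq hB] at h₂
  omega

/-- The basic counting argument: a right-aligned slot `x₁` and a left-aligned slot `x₃`
flood `[x₁, n]` and `[1, x₃]` with `+`-subsets, and there are at most `p` of them. -/
theorem count_rightAligned_leftAligned (hτ : IsCoSignotope n d τ) (hp : plusCount τ ≤ p)
    {B₁ B₃ : Finset ℕ} {x₁ x₃ : ℕ} (hB₁ : τ B₁ = true) (hx₁ : x₁ ∈ B₁)
    (hRA : RightAligned (series n τ (B₁.erase x₁))) (hB₃ : τ B₃ = true) (hx₃ : x₃ ∈ B₃)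
    (hLA : LeftAligned (series n τ (B₃.erase x₃))) :
    n + x₃ + 1 ≤ p + x₁ + #{b ∈ B₁ | x₁ < b} + #{b ∈ B₃ | b < x₃} ∨
      (n + x₃ ≤ p + x₁ + #{b ∈ B₁ | x₁ < b} + #{b ∈ B₃ | b < x₃} ∧
        ∃ u ∈ B₃.erase x₃ \ B₁.erase x₁, x₁ ≤ u ∧ ∃ v ∈ B₁.erase x₁ \ B₃.erase x₃, v ≤ x₃) := by
  have hD : B₁.erase x₁ ≠ B₃.erase x₃ := fun h => hRA.not_leftAligned (h ▸ hLA)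
  have h₁ := card_Icc_sdiff_erase_add_card_filter_gt (x := x₁) (hτ.subset_Icc hB₁)
  have h₃ := card_Icc_sdiff_erase_add_card_filter_lt (x := x₃) (hτ.subset_Icc hB₃)
  have := (mem_Icc.1 (hτ.subset_Icc hB₁ hx₁)).2
  rcases hτ.card_add_card_le_of_forall_insert hp hD
    (fun u hu => hτ.apply_insert_erase_of_rightAligned hB₁ hx₁ hRA hu)
    (fun v hv => hτ.apply_insert_erase_of_leftAligned hB₃ hx₃ hLA hv) with h | ⟨h, hw⟩
  · left; omega
  · right; exact ⟨by omega, hw⟩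

theorem rightAligned_of_lt (hτ : IsCoSignotope n d τ) (hp : plusCount τ ≤ p) (hpn : p + d ≤ n)
    (hB : τ B = true) {x' : ℕ} (hx : x ∈ B) (hx' : x' ∈ B) (hlt : x < x')
    (hRA : RightAligned (series n τ (B.erase x))) : RightAligned (series n τ (B.erase x')) := by
  by_contra hRA'
  have hLA := hτ.leftAligned_erase_of_not_rightAligned hp hpn hB hx' hRA'
  have hsplit : {b ∈ B | x < b} ⊆ Ioo x x' ∪ insert x' {b ∈ B | x' < b} := by
    intro b hb
    simp only [mem_filter, mem_union, mem_Ioo, mem_insert] at hb ⊢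
    rcases lt_trichotomy b x' with h | h | h
    exacts [Or.inl ⟨hb.2, h⟩, Or.inr (Or.inl h), Or.inr (Or.inr ⟨hb.1, h⟩)]
  have h₁ := (card_le_card hsplit).trans ((card_union_le _ _).trans
    (Nat.add_le_add_left (card_insert_le _ _) _))
  have h₂ := card_filter_lt_add_card_filter_gt hx'
  rw [Nat.card_Ioo, hτ.card_eq hB] at *
  rcases hτ.count_rightAligned_leftAligned hp hB hx hRA hB hx' hLA with h | ⟨h, -⟩ <;> omega

theorem not_rightAligned_of_lt (hτ : IsCoSignotope n d τ) (hp : plusCount τ ≤ p)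
    (hpn : p + d ≤ n) (hB : τ B = true) {x' : ℕ} (hx : x ∈ B) (hx' : x' ∈ B) (hlt : x < x')
    (hRA' : ¬ RightAligned (series n τ (B.erase x'))) :
    ¬ RightAligned (series n τ (B.erase x)) :=
  fun hRA => hRA' (hτ.rightAligned_of_lt hp hpn hB hx hx' hlt hRA)

theorem rightAligned_erase_insert_iff (hτ : IsCoSignotope n d τ) (hp : plusCount τ ≤ p)
    (hpn : p + d ≤ n) {c u v : ℕ} (hc : c ∈ C) (hu : u ∉ C) (hv : v ∉ C)
    (huC : τ (insert u C) = true) (hvC : τ (insert v C) = true) :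
    RightAligned (series n τ ((insert u C).erase c)) ↔
      RightAligned (series n τ ((insert v C).erase c)) := by
  suffices key : ∀ u v, u ∉ C → v ∉ C → τ (insert u C) = true → τ (insert v C) = true →
      RightAligned (series n τ ((insert u C).erase c)) →
      RightAligned (series n τ ((insert v C).erase c)) from
    ⟨key u v hu hv huC hvC, key v u hv hu hvC huC⟩
  intro u v hu hv huC hvC hRA
  by_contra hRA'
  have hcv : c ∈ insert v C := mem_insert_of_mem hc
  have hLA := hτ.leftAligned_erase_of_not_rightAligned hp hpn hvC hcv hRA'
  have hu' := card_filter_insert_le C u (c < ·)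
  have hv' := card_filter_insert_le C v (· < c)
  have hsplit := card_filter_lt_add_card_filter_gt hc
  have hCd := (hτ.base_of_plus hu huC).2.1
  rcases hτ.count_rightAligned_leftAligned hp huC (mem_insert_of_mem hc) hRA hvC hcv hLA with
    h | ⟨h, w, hw, hcw, w', hw', hw'c⟩
  · split_ifs at hu' hv' <;> omega
  · have hwv : w = v := by
      simp only [mem_sdiff, mem_erase, mem_insert] at hw
      tauto
    have hw'u : w' = u := by
      simp only [mem_sdiff, mem_erase, mem_insert] at hw'
      tauto
    subst hwv hw'u
    have : c ≠ w := fun h => hv (h ▸ hc)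
    have : c ≠ w' := fun h => hu (h ▸ hc)
    rw [if_neg (by omega)] at hu' hv'
    omega

end Alignment

section Gamma

variable {n tn d p : ℕ} {τ : Finset ℕ → Bool} {B : Finset ℕ} {x : ℕ}

theorem gammaAt_mem_Icc (hτ : IsCoSignotope n d τ) (hp : plusCount τ ≤ p) (hpn : p + d ≤ n)
    (hptn : p + d ≤ tn) (hB : τ B = true) (hx : x ∈ B) : gammaAt n tn τ B x ∈ Icc 1 tn := by
  have hxI := mem_Icc.1 (hτ.subset_Icc hB hx)
  rw [mem_Icc, gammaAt]
  by_cases hRA : RightAligned (series n τ (B.erase x))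
  · have := hτ.add_two_le_of_rightAligned hp hB hx hRA
    rw [alignShift_of_rightAligned hRA]
    omega
  · have := hτ.lt_of_leftAligned hp hB hx
      (hτ.leftAligned_erase_of_not_rightAligned hp hpn hB hx hRA)
    rw [alignShift_of_not_rightAligned hRA]
    omega

theorem strictMonoOn_gammaAt (hτ : IsCoSignotope n d τ) (hp : plusCount τ ≤ p)
    (hpn : p + d ≤ n) (hptn : p + d ≤ tn) (hB : τ B = true) :
    StrictMonoOn (gammaAt n tn τ B) B := by
  intro x hx y hy hxy
  simp only [gammaAt]
  by_cases hRAy : RightAligned (series n τ (B.erase y))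
  · have := hτ.add_two_le_of_rightAligned hp hB hy hRAy
    rw [alignShift_of_rightAligned hRAy]
    by_cases hRAx : RightAligned (series n τ (B.erase x))
    · have := hτ.add_two_le_of_rightAligned hp hB hx hRAx
      rw [alignShift_of_rightAligned hRAx]
      omega
    have hLA := hτ.leftAligned_erase_of_not_rightAligned hp hpn hB hx hRAx
    have hgt : #{b ∈ B | y < b} + 1 ≤ #{b ∈ B | x < b} := by
      rw [← card_insert_of_notMem (s := {b ∈ B | y < b}) fun h => lt_irrefl y (mem_filter.1 h).2]
      refine card_le_card fun b hb => ?_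
      simp only [mem_insert, mem_filter] at hb ⊢
      rcases hb with rfl | hb
      exacts [⟨hy, hxy⟩, ⟨hb.1, hxy.trans hb.2⟩]
    have hsplit := card_filter_lt_add_card_filter_gt hx
    rw [hτ.card_eq hB, alignShift_of_not_rightAligned hRAx] at *
    rcases hτ.count_rightAligned_leftAligned hp hB hy hRAy hB hx hLA with h | ⟨h, -⟩ <;> omega
  · rwa [alignShift_of_not_rightAligned hRAy, alignShift_of_not_rightAligned
      (hτ.not_rightAligned_of_lt hp hpn hB hx hy hxy hRAy)]

theorem card_gammaFun (hτ : IsCoSignotope n d τ) (hp : plusCount τ ≤ p) (hpn : p + d ≤ n)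
    (hptn : p + d ≤ tn) (hB : τ B = true) : #(gammaFun n tn τ B) = d := by
  rw [gammaFun_eq_image, card_image_of_injOn (hτ.strictMonoOn_gammaAt hp hpn hptn hB).injOn,
    hτ.card_eq hB]

theorem gammaFun_subset_Icc (hτ : IsCoSignotope n d τ) (hp : plusCount τ ≤ p)
    (hpn : p + d ≤ n) (hptn : p + d ≤ tn) (hB : τ B = true) :
    gammaFun n tn τ B ⊆ Icc 1 tn := by
  intro z hz
  obtain ⟨x, hx, rfl⟩ := mem_image.1 hz
  exact hτ.gammaAt_mem_Icc hp hpn hptn hB hx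

theorem gammaFun_erase (hτ : IsCoSignotope n d τ) (hp : plusCount τ ≤ p) (hpn : p + d ≤ n)
    (hptn : p + d ≤ tn) (hB : τ B = true) (hx : x ∈ B) :
    (gammaFun n tn τ B).erase (gammaAt n tn τ B x) = (B.erase x).image (gammaAt n tn τ B) := by
  rw [gammaFun_eq_image, erase_eq, erase_eq, image_sdiff_of_injOn
    (hτ.strictMonoOn_gammaAt hp hpn hptn hB).injOn (singleton_subset_iff.2 hx), image_singleton]

theorem card_filter_gammaFun_lt (hτ : IsCoSignotope n d τ) (hp : plusCount τ ≤ p)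
    (hpn : p + d ≤ n) (hptn : p + d ≤ tn) (hB : τ B = true) (hx : x ∈ B) :
    #{z ∈ gammaFun n tn τ B | z < gammaAt n tn τ B x} = #{b ∈ B | b < x} :=
  card_filter_image_lt_of_strictMonoOn (hτ.strictMonoOn_gammaAt hp hpn hptn hB) hx

theorem card_filter_gammaFun_gt (hτ : IsCoSignotope n d τ) (hp : plusCount τ ≤ p)
    (hpn : p + d ≤ n) (hptn : p + d ≤ tn) (hB : τ B = true) (hx : x ∈ B) :
    #{z ∈ gammaFun n tn τ B | gammaAt n tn τ B x < z} = #{b ∈ B | x < b} :=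
  card_filter_image_gt_of_strictMonoOn (hτ.strictMonoOn_gammaAt hp hpn hptn hB) hx

/-- The `+`-subsets flooded from the left-aligned slot `e` of `BL` and from the right-aligned
slot `c` of `BR`, which `γ` sends to the same point `e`, fit into the bound `p` only in this
extreme configuration. -/
theorem mismatch_bounds (hτ : IsCoSignotope n d τ) (hp : plusCount τ ≤ p) (hpn : p + d ≤ n)
    (hptn : p + d ≤ tn) {BL BR : Finset ℕ} {wL wR e c : ℕ} (hBL : τ BL = true)
    (hBR : τ BR = true) (hwL : wL ∈ BL) (hwR : wR ∈ BR)
    (hCt : (gammaFun n tn τ BL).erase (gammaAt n tn τ BL wL) =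
      (gammaFun n tn τ BR).erase (gammaAt n tn τ BR wR))
    (he : e ∈ BL.erase wL) (hLA : ¬ RightAligned (series n τ (BL.erase e)))
    (hc : c ∈ BR) (hRA : RightAligned (series n τ (BR.erase c))) (hce : gammaAt n tn τ BR c = e) :
    gammaAt n tn τ BL wL < e ∧ e < gammaAt n tn τ BR wR ∧ tn ≤ n ∧
      ∃ u ∈ BL.erase e \ BR.erase c, c ≤ u := by
  obtain ⟨hewL, heL⟩ := mem_erase.1 he
  have hee : gammaAt n tn τ BL e = e := alignShift_of_not_rightAligned hLA
  set Ct := (gammaFun n tn τ BL).erase (gammaAt n tn τ BL wL)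
  have heCt : e ∈ Ct := mem_erase.2 ⟨fun h => hewL ((hτ.strictMonoOn_gammaAt hp hpn hptn hBL).injOn
    heL hwL (hee.trans h)), hee ▸ gammaAt_mem_gammaFun heL⟩
  have hL : insert (gammaAt n tn τ BL wL) Ct = gammaFun n tn τ BL :=
    insert_erase (gammaAt_mem_gammaFun hwL)
  have hR : insert (gammaAt n tn τ BR wR) Ct = gammaFun n tn τ BR := by
    rw [hCt]; exact insert_erase (gammaAt_mem_gammaFun hwR)
  have hbelow := hτ.card_filter_gammaFun_lt hp hpn hptn hBL heL
  have habove := hτ.card_filter_gammaFun_gt hp hpn hptn hBR hc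
  rw [hee, ← hL] at hbelow
  rw [hce, ← hR] at habove
  have hL' := card_filter_insert_le Ct (gammaAt n tn τ BL wL) (· < e)
  have hR' := card_filter_insert_le Ct (gammaAt n tn τ BR wR) (e < ·)
  have hsplit := card_filter_lt_add_card_filter_gt heCt
  have hCtd : #Ct + 1 = d := by
    rw [card_erase_of_mem (gammaAt_mem_gammaFun hwL), hτ.card_gammaFun hp hpn hptn hBL]
    have := card_pos.2 ⟨e, heL⟩
    rw [hτ.card_eq hBL] at this
    omega
  have hshift : c + tn = e + n := by
    have := hτ.add_two_le_of_rightAligned hp hBR hc hRA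
    rw [← hce, gammaAt, alignShift_of_rightAligned hRA]
    omega
  have hLA' := hτ.leftAligned_erase_of_not_rightAligned hp hpn hBL heL hLA
  rcases hτ.count_rightAligned_leftAligned hp hBR hc hRA hBL heL hLA' with h | ⟨h, u, hu, hcu, -⟩
  · split_ifs at hL' hR' <;> omega
  · split_ifs at hL' hR' with h₁ h₂ <;> first | omega | exact ⟨h₁, h₂, by omega, u, hu, hcu⟩

end Gamma

section BaseUniqueness

variable {n tn d p : ℕ} {τ : Finset ℕ → Bool} {B₁ B₃ : Finset ℕ} {w₁ w₃ : ℕ}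

theorem exists_gammaAt_eq_of_gammaFun_erase_eq (hτ : IsCoSignotope n d τ)
    (hp : plusCount τ ≤ p) (hpn : p + d ≤ n) (hptn : p + d ≤ tn) (hB₁ : τ B₁ = true)
    (hB₃ : τ B₃ = true) (hw₁ : w₁ ∈ B₁) (hw₃ : w₃ ∈ B₃)
    (hCt : (gammaFun n tn τ B₁).erase (gammaAt n tn τ B₁ w₁) =
      (gammaFun n tn τ B₃).erase (gammaAt n tn τ B₃ w₃)) {b : ℕ} (hb : b ∈ B₁.erase w₁) :
    ∃ b' ∈ B₃.erase w₃, gammaAt n tn τ B₃ b' = gammaAt n tn τ B₁ b := by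
  have : gammaAt n tn τ B₁ b ∈ (B₁.erase w₁).image (gammaAt n tn τ B₁) := mem_image_of_mem _ hb
  rwa [← hτ.gammaFun_erase hp hpn hptn hB₁ hw₁, hCt, hτ.gammaFun_erase hp hpn hptn hB₃ hw₃,
    mem_image] at this

theorem gammaAt_ne_of_rightAligned_of_not_rightAligned (hτ : IsCoSignotope n d τ)
    (hp : plusCount τ ≤ p) (hpn : p + d ≤ n) (hptn : p + d ≤ tn) (hB₁ : τ B₁ = true)
    (hB₃ : τ B₃ = true) (hw₁ : w₁ ∈ B₁) (hw₃ : w₃ ∈ B₃)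
    (hCt : (gammaFun n tn τ B₁).erase (gammaAt n tn τ B₁ w₁) =
      (gammaFun n tn τ B₃).erase (gammaAt n tn τ B₃ w₃))
    (hle : gammaAt n tn τ B₁ w₁ ≤ gammaAt n tn τ B₃ w₃) {b b' : ℕ} (hb : b ∈ B₁)
    (hbRA : RightAligned (series n τ (B₁.erase b))) (hb' : b' ∈ B₃.erase w₃)
    (hb'LA : ¬ RightAligned (series n τ (B₃.erase b'))) :
    gammaAt n tn τ B₁ b ≠ gammaAt n tn τ B₃ b' := by
  intro h
  rw [gammaAt, gammaAt, alignShift_of_not_rightAligned hb'LA] at h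
  have := hτ.mismatch_bounds hp hpn hptn hB₃ hB₁ hw₃ hw₁ hCt.symm hb' hb'LA hb hbRA h
  omega

theorem exists_gt_of_not_rightAligned_of_rightAligned (hτ : IsCoSignotope n d τ)
    (hp : plusCount τ ≤ p) (hpn : p + d ≤ n) (hptn : p + d ≤ tn) (hB₁ : τ B₁ = true)
    (hB₃ : τ B₃ = true) (hw₁ : w₁ ∈ B₁) (hw₃ : w₃ ∈ B₃)
    (hCt : (gammaFun n tn τ B₁).erase (gammaAt n tn τ B₁ w₁) =
      (gammaFun n tn τ B₃).erase (gammaAt n tn τ B₃ w₃))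
    (hle : gammaAt n tn τ B₁ w₁ ≤ gammaAt n tn τ B₃ w₃) {e c : ℕ} (he : e ∈ B₁.erase w₁)
    (heLA : ¬ RightAligned (series n τ (B₁.erase e))) (hc : c ∈ B₃.erase w₃)
    (hcRA : RightAligned (series n τ (B₃.erase c))) (hce : gammaAt n tn τ B₃ c = e) :
    ∃ u ∈ B₁.erase w₁, e < u ∧ ¬ RightAligned (series n τ (B₁.erase u)) ∧
      ∃ c' ∈ B₃.erase w₃, RightAligned (series n τ (B₃.erase c')) ∧
        gammaAt n tn τ B₃ c' = u := by
  have hcB₃ := mem_of_mem_erase hc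
  obtain ⟨hz₁, -, htn, u, hu, hcu⟩ :=
    hτ.mismatch_bounds hp hpn hptn hB₁ hB₃ hw₁ hw₃ hCt he heLA hcB₃ hcRA hce
  obtain ⟨hu₁, hu'⟩ := mem_sdiff.1 hu
  obtain ⟨hue, huB₁⟩ := mem_erase.1 hu₁
  have huc : u ∈ B₃ → u = c := fun h => by_contra fun h' => hu' (mem_erase.2 ⟨h', h⟩)
  have hc2 := hτ.add_two_le_of_rightAligned hp hB₃ hcB₃ hcRA
  rw [gammaAt, alignShift_of_rightAligned hcRA] at hce
  have heu : e < u := by omega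
  have hγe : gammaAt n tn τ B₁ e = e := alignShift_of_not_rightAligned heLA
  have hγu : e < gammaAt n tn τ B₁ u :=
    hγe ▸ hτ.strictMonoOn_gammaAt hp hpn hptn hB₁ (mem_of_mem_erase he) huB₁ heu
  have huw₁ : u ≠ w₁ := by rintro rfl; omega
  obtain ⟨b, hb, hbu⟩ := hτ.exists_gammaAt_eq_of_gammaFun_erase_eq hp hpn hptn hB₁ hB₃
    hw₁ hw₃ hCt (mem_erase.2 ⟨huw₁, huB₁⟩)
  have hbB₃ := mem_of_mem_erase hb
  by_cases hbRA : RightAligned (series n τ (B₃.erase b)) <;>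
    by_cases huRA : RightAligned (series n τ (B₁.erase u))
  · have := hτ.add_two_le_of_rightAligned hp hB₃ hbB₃ hbRA
    rw [gammaAt, gammaAt, alignShift_of_rightAligned hbRA, alignShift_of_rightAligned huRA]
      at hbu
    obtain rfl : b = u := by omega
    rw [gammaAt, alignShift_of_rightAligned huRA, huc hbB₃] at hγu
    omega
  · exact ⟨u, mem_erase.2 ⟨huw₁, huB₁⟩, heu, huRA, b, hb, hbRA,
      hbu.trans (alignShift_of_not_rightAligned huRA)⟩
  · exact absurd hbu.symm (hτ.gammaAt_ne_of_rightAligned_of_not_rightAligned hp hpn hptn hB₁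
      hB₃ hw₁ hw₃ hCt hle huB₁ huRA hb hbRA)
  · rw [gammaAt, gammaAt, alignShift_of_not_rightAligned hbRA,
      alignShift_of_not_rightAligned huRA] at hbu
    subst hbu
    exact absurd (huc hbB₃ ▸ hcRA) hbRA

theorem gammaAt_ne_of_not_rightAligned_of_rightAligned (hτ : IsCoSignotope n d τ)
    (hp : plusCount τ ≤ p) (hpn : p + d ≤ n) (hptn : p + d ≤ tn) (hB₁ : τ B₁ = true)
    (hB₃ : τ B₃ = true) (hw₁ : w₁ ∈ B₁) (hw₃ : w₃ ∈ B₃)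
    (hCt : (gammaFun n tn τ B₁).erase (gammaAt n tn τ B₁ w₁) =
      (gammaFun n tn τ B₃).erase (gammaAt n tn τ B₃ w₃))
    (hle : gammaAt n tn τ B₁ w₁ ≤ gammaAt n tn τ B₃ w₃) {b b' : ℕ} (hb : b ∈ B₁.erase w₁)
    (hbLA : ¬ RightAligned (series n τ (B₁.erase b))) (hb' : b' ∈ B₃.erase w₃)
    (hb'RA : RightAligned (series n τ (B₃.erase b'))) :
    gammaAt n tn τ B₃ b' ≠ b := by
  intro hb'b
  classical
  -- a largest such `e` would be followed by a larger one
  set M := {e ∈ B₁.erase w₁ | ¬ RightAligned (series n τ (B₁.erase e)) ∧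
    ∃ c ∈ B₃.erase w₃, RightAligned (series n τ (B₃.erase c)) ∧ gammaAt n tn τ B₃ c = e}
  have hM : M.Nonempty := ⟨b, mem_filter.2 ⟨hb, hbLA, b', hb', hb'RA, hb'b⟩⟩
  obtain ⟨he, heLA, c, hc, hcRA, hce⟩ := mem_filter.1 (M.max'_mem hM)
  obtain ⟨u, hu, hlt, huLA, hu'⟩ := hτ.exists_gt_of_not_rightAligned_of_rightAligned hp hpn hptn
    hB₁ hB₃ hw₁ hw₃ hCt hle he heLA hc hcRA hce
  exact absurd (M.le_max' u (mem_filter.2 ⟨hu, huLA, hu'⟩)) (not_le.2 hlt)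

theorem erase_eq_erase_of_gammaFun_erase_eq_of_le (hτ : IsCoSignotope n d τ)
    (hp : plusCount τ ≤ p) (hpn : p + d ≤ n) (hptn : p + d ≤ tn) (hB₁ : τ B₁ = true)
    (hB₃ : τ B₃ = true) (hw₁ : w₁ ∈ B₁) (hw₃ : w₃ ∈ B₃)
    (hCt : (gammaFun n tn τ B₁).erase (gammaAt n tn τ B₁ w₁) =
      (gammaFun n tn τ B₃).erase (gammaAt n tn τ B₃ w₃))
    (hle : gammaAt n tn τ B₁ w₁ ≤ gammaAt n tn τ B₃ w₃) : B₁.erase w₁ = B₃.erase w₃ := by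
  refine eq_of_subset_of_card_le (fun b hb => ?_) ?_
  · obtain ⟨b', hb', hb'b⟩ :=
      hτ.exists_gammaAt_eq_of_gammaFun_erase_eq hp hpn hptn hB₁ hB₃ hw₁ hw₃ hCt hb
    have hbB₁ := mem_of_mem_erase hb
    by_cases hbRA : RightAligned (series n τ (B₁.erase b)) <;>
      by_cases hb'RA : RightAligned (series n τ (B₃.erase b'))
    · have := hτ.add_two_le_of_rightAligned hp hB₁ hbB₁ hbRA
      have := hτ.add_two_le_of_rightAligned hp hB₃ (mem_of_mem_erase hb') hb'RA
      rw [gammaAt, gammaAt, alignShift_of_rightAligned hbRA, alignShift_of_rightAligned hb'RA]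
        at hb'b
      rwa [show b = b' by omega]
    · exact absurd hb'b.symm (hτ.gammaAt_ne_of_rightAligned_of_not_rightAligned hp hpn hptn hB₁
        hB₃ hw₁ hw₃ hCt hle hbB₁ hbRA hb' hb'RA)
    · exact absurd (hb'b.trans (alignShift_of_not_rightAligned hbRA))
        (hτ.gammaAt_ne_of_not_rightAligned_of_rightAligned hp hpn hptn hB₁ hB₃ hw₁ hw₃ hCt hle
          hb hbRA hb' hb'RA)
    · rw [gammaAt, gammaAt, alignShift_of_not_rightAligned hbRA,
        alignShift_of_not_rightAligned hb'RA] at hb'b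
      rwa [← hb'b]
  · rw [card_erase_of_mem hw₁, card_erase_of_mem hw₃, hτ.card_eq hB₁, hτ.card_eq hB₃]

/-- A `+`-subset of `φ(τ)` containing the `(d-1)`-set `Ct` comes from a `+`-subset of `τ`
containing a base determined by `Ct`. -/
theorem erase_eq_erase_of_gammaFun_erase_eq (hτ : IsCoSignotope n d τ) (hp : plusCount τ ≤ p)
    (hpn : p + d ≤ n) (hptn : p + d ≤ tn) (hB₁ : τ B₁ = true) (hB₃ : τ B₃ = true)
    (hw₁ : w₁ ∈ B₁) (hw₃ : w₃ ∈ B₃)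
    (hCt : (gammaFun n tn τ B₁).erase (gammaAt n tn τ B₁ w₁) =
      (gammaFun n tn τ B₃).erase (gammaAt n tn τ B₃ w₃)) : B₁.erase w₁ = B₃.erase w₃ := by
  rcases le_total (gammaAt n tn τ B₁ w₁) (gammaAt n tn τ B₃ w₃) with hle | hle
  · exact hτ.erase_eq_erase_of_gammaFun_erase_eq_of_le hp hpn hptn hB₁ hB₃ hw₁ hw₃ hCt hle
  · exact (hτ.erase_eq_erase_of_gammaFun_erase_eq_of_le hp hpn hptn hB₃ hB₁ hw₃ hw₁ hCt.symm
      hle).symm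

theorem gammaFun_injOn (hτ : IsCoSignotope n d τ) (hp : plusCount τ ≤ p) (hpn : p + d ≤ n)
    (hptn : p + d ≤ tn) : Set.InjOn (gammaFun n tn τ) {B | τ B = true} := by
  intro B hB B' hB' h
  obtain rfl | ⟨x, hx⟩ := B.eq_empty_or_nonempty
  · have hd : d = 0 := by rw [← hτ.card_eq hB, card_empty]
    exact (card_eq_zero.1 ((hτ.card_eq hB').trans hd)).symm
  obtain ⟨x', hx', hxx'⟩ : ∃ x' ∈ B', gammaAt n tn τ B' x' = gammaAt n tn τ B x :=
    mem_image.1 (by rw [← gammaFun_eq_image, ← h]; exact gammaAt_mem_gammaFun hx)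
  have hbase := hτ.erase_eq_erase_of_gammaFun_erase_eq hp hpn hptn hB hB' hx hx'
    (by rw [h, hxx'])
  rw [gammaAt, gammaAt, ← hbase] at hxx'
  have hxx : x = x' := by
    by_cases hRA : RightAligned (series n τ (B.erase x))
    · have := hτ.add_two_le_of_rightAligned hp hB hx hRA
      have := hτ.add_two_le_of_rightAligned hp hB' hx' (hbase ▸ hRA)
      rw [alignShift_of_rightAligned hRA, alignShift_of_rightAligned hRA] at hxx'
      omega
    · rwa [alignShift_of_not_rightAligned hRA, alignShift_of_not_rightAligned hRA, eq_comm]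
        at hxx'
  rw [← insert_erase hx, ← insert_erase hx', hbase, hxx]

theorem plusCount_phiFun (hτ : IsCoSignotope n d τ) (hp : plusCount τ ≤ p) (hpn : p + d ≤ n)
    (hptn : p + d ≤ tn) : plusCount (phiFun n tn τ) = plusCount τ := by
  have : {A | phiFun n tn τ A = true} = gammaFun n tn τ '' {B | τ B = true} := by
    ext A
    simp only [Set.mem_ofPred_eq, Set.mem_image, phiFun_eq_true_iff]
    exact ⟨fun ⟨B, hB, h⟩ => ⟨B, hB, h.symm⟩, fun ⟨B, hB, h⟩ => ⟨B, hB, h.symm⟩⟩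
  rw [plusCount, this, (hτ.gammaFun_injOn hp hpn hptn).ncard_image, plusCount]

end BaseUniqueness

section PhiFun

variable {n tn d p : ℕ} {τ : Finset ℕ → Bool} {B C Ct : Finset ℕ} {x y z a b c : ℕ}

theorem gammaAt_insert_eq (hτ : IsCoSignotope n d τ) (hp : plusCount τ ≤ p) (hpn : p + d ≤ n)
    (hxC : x ∉ C) (hx : τ (insert x C) = true) (hyC : y ∉ C) (hy : τ (insert y C) = true)
    (hc : c ∈ C) : gammaAt n tn τ (insert y C) c = gammaAt n tn τ (insert x C) c := by
  have := hτ.rightAligned_erase_insert_iff hp hpn hc hyC hxC hy hx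
  by_cases hRA : RightAligned (series n τ ((insert y C).erase c))
  · rw [gammaAt, gammaAt, alignShift_of_rightAligned hRA, alignShift_of_rightAligned (this.1 hRA)]
  · rw [gammaAt, gammaAt, alignShift_of_not_rightAligned hRA,
      alignShift_of_not_rightAligned (this.not.1 hRA)]

theorem gammaFun_insert (hτ : IsCoSignotope n d τ) (hp : plusCount τ ≤ p) (hpn : p + d ≤ n)
    (hxC : x ∉ C) (hx : τ (insert x C) = true) (hyC : y ∉ C) (hy : τ (insert y C) = true) :
    gammaFun n tn τ (insert y C) =
      insert (alignShift n tn τ C y) (C.image (gammaAt n tn τ (insert x C))) := by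
  rw [gammaFun_eq_image, image_insert, gammaAt_insert hyC]
  exact congrArg _ (image_congr fun c hc => hτ.gammaAt_insert_eq hp hpn hxC hx hyC hy hc)

theorem alignShift_notMem_image (hτ : IsCoSignotope n d τ) (hp : plusCount τ ≤ p)
    (hpn : p + d ≤ n) (hptn : p + d ≤ tn) (hxC : x ∉ C) (hx : τ (insert x C) = true) :
    alignShift n tn τ C x ∉ C.image (gammaAt n tn τ (insert x C)) := by
  have := notMem_erase (gammaAt n tn τ (insert x C) x) (gammaFun n tn τ (insert x C))
  rwa [hτ.gammaFun_erase hp hpn hptn hx (mem_insert_self x C), erase_insert hxC,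
    gammaAt_insert hxC] at this

theorem card_image_gammaAt (hτ : IsCoSignotope n d τ) (hp : plusCount τ ≤ p) (hpn : p + d ≤ n)
    (hptn : p + d ≤ tn) (hxC : x ∉ C) (hx : τ (insert x C) = true) :
    #(C.image (gammaAt n tn τ (insert x C))) + 1 = d := by
  rw [card_image_of_injOn ((hτ.strictMonoOn_gammaAt hp hpn hptn hx).injOn.mono
    (coe_subset.2 (subset_insert x C)))]
  exact (hτ.base_of_plus hxC hx).2.1

theorem phiFun_insert_alignShift (hτ : IsCoSignotope n d τ) (hp : plusCount τ ≤ p)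
    (hpn : p + d ≤ n) (hxC : x ∉ C) (hx : τ (insert x C) = true) (hyC : y ∉ C)
    (hy : τ (insert y C) = true) :
    phiFun n tn τ (insert (alignShift n tn τ C y) (C.image (gammaAt n tn τ (insert x C)))) =
      true :=
  phiFun_eq_true_iff.2 ⟨insert y C, hy, (hτ.gammaFun_insert hp hpn hxC hx hyC hy).symm⟩

theorem exists_base_of_phiFun_insert (hτ : IsCoSignotope n d τ) (hp : plusCount τ ≤ p)
    (hpn : p + d ≤ n) (hptn : p + d ≤ tn) (hz : z ∉ Ct)
    (h : phiFun n tn τ (insert z Ct) = true) :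
    ∃ C x, x ∉ C ∧ τ (insert x C) = true ∧ C.image (gammaAt n tn τ (insert x C)) = Ct ∧
      alignShift n tn τ C x = z := by
  obtain ⟨B, hB, hBz⟩ := phiFun_eq_true_iff.1 h
  obtain ⟨x, hx, hxz⟩ : ∃ x ∈ B, gammaAt n tn τ B x = z :=
    mem_image.1 (by rw [← gammaFun_eq_image, ← hBz]; exact mem_insert_self z Ct)
  refine ⟨B.erase x, x, notMem_erase x B, by rwa [insert_erase hx], ?_, hxz⟩
  rw [insert_erase hx, ← hτ.gammaFun_erase hp hpn hptn hB hx, ← hBz, hxz]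
  exact erase_insert hz

/-- The `φ(τ)`-series of the image `Ct` of a base `C` is the `τ`-series of `C`, moved by
`alignShift` and padded with `-`. -/
theorem phiFun_insert_eq_true_iff (hτ : IsCoSignotope n d τ) (hp : plusCount τ ≤ p)
    (hpn : p + d ≤ n) (hptn : p + d ≤ tn) (hxC : x ∉ C) (hx : τ (insert x C) = true)
    (hz : z ∉ C.image (gammaAt n tn τ (insert x C))) :
    phiFun n tn τ (insert z (C.image (gammaAt n tn τ (insert x C)))) = true ↔
      ∃ y ∉ C, τ (insert y C) = true ∧ alignShift n tn τ C y = z := by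
  constructor
  · intro h
    obtain ⟨C', y, hyC', hy, hCt, hyz⟩ := hτ.exists_base_of_phiFun_insert hp hpn hptn hz h
    have hbase := hτ.erase_eq_erase_of_gammaFun_erase_eq hp hpn hptn hy hx
      (mem_insert_self y C') (mem_insert_self x C) (by
        rw [hτ.gammaFun_erase hp hpn hptn hy (mem_insert_self y C'),
          hτ.gammaFun_erase hp hpn hptn hx (mem_insert_self x C), erase_insert hyC',
          erase_insert hxC, hCt])
    rw [erase_insert hyC', erase_insert hxC] at hbase
    subst hbase
    exact ⟨y, hyC', hy, hyz⟩
  · rintro ⟨y, hyC, hy, rfl⟩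
    exact hτ.phiFun_insert_alignShift hp hpn hxC hx hyC hy

theorem exists_alignShift_eq_of_rightAligned (hτ : IsCoSignotope n d τ) (hp : plusCount τ ≤ p)
    (hpn : p + d ≤ n) (hptn : p + d ≤ tn) (hxC : x ∉ C) (hx : τ (insert x C) = true)
    (hRA : RightAligned (series n τ C)) (hz : z ∉ C.image (gammaAt n tn τ (insert x C)))
    (hztn : z ≤ tn) (hxz : alignShift n tn τ C x ≤ z) :
    ∃ y ∈ Icc 1 n \ C, x ≤ y ∧ alignShift n tn τ C y = z := by
  have hxB := mem_insert_self x C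
  have hx2 := hτ.add_two_le_of_rightAligned hp hx hxB (by rwa [erase_insert hxC])
  have hx1 := (mem_Icc.1 (hτ.subset_Icc hx hxB)).1
  rw [alignShift_of_rightAligned hRA] at hxz
  refine ⟨z + n - tn, mem_sdiff.2 ⟨mem_Icc.2 ⟨by omega, by omega⟩, fun hyC => hz ?_⟩, by omega,
    by rw [alignShift_of_rightAligned hRA]; omega⟩
  have hyx : x < z + n - tn := lt_of_le_of_ne (by omega) fun h => hxC (h ▸ hyC)
  have hyRA := hτ.rightAligned_of_lt hp hpn hx hxB (mem_insert_of_mem hyC) hyx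
    (by rwa [erase_insert hxC])
  refine mem_image.2 ⟨z + n - tn, hyC, ?_⟩
  rw [gammaAt, alignShift_of_rightAligned hyRA]
  omega

theorem mem_Icc_sdiff_of_not_rightAligned (hτ : IsCoSignotope n d τ) (hp : plusCount τ ≤ p)
    (hpn : p + d ≤ n) (hxC : x ∉ C) (hx : τ (insert x C) = true)
    (hLA : ¬ RightAligned (series n τ C)) (hz : z ∉ C.image (gammaAt n tn τ (insert x C)))
    (hz1 : 1 ≤ z) (hzx : z ≤ x) : z ∈ Icc 1 n \ C := by
  have hxB := mem_insert_self x C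
  have hxn := (mem_Icc.1 (hτ.subset_Icc hx hxB)).2
  refine mem_sdiff.2 ⟨mem_Icc.2 ⟨hz1, hzx.trans hxn⟩, fun hzC => hz ?_⟩
  have hzx' : z < x := lt_of_le_of_ne hzx fun h => hxC (h ▸ hzC)
  have hzLA := hτ.not_rightAligned_of_lt hp hpn hx (mem_insert_of_mem hzC) hxB hzx'
    (by rwa [erase_insert hxC])
  exact mem_image.2 ⟨z, hzC, alignShift_of_not_rightAligned hzLA⟩

theorem phiFun_insert_of_lt_of_lt (hτ : IsCoSignotope n d τ) (hp : plusCount τ ≤ p)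
    (hpn : p + d ≤ n) (hptn : p + d ≤ tn) (hb : b ∈ Icc 1 tn \ Ct) (hab : a < b) (hbc : b < c)
    (haCt : a ∉ Ct) (ha : phiFun n tn τ (insert a Ct) = true) (hcCt : c ∉ Ct)
    (hc : phiFun n tn τ (insert c Ct) = true) : phiFun n tn τ (insert b Ct) = true := by
  obtain ⟨C, x, hxC, hx, rfl, rfl⟩ := hτ.exists_base_of_phiFun_insert hp hpn hptn haCt ha
  obtain ⟨y, hyC, hy, rfl⟩ := (hτ.phiFun_insert_eq_true_iff hp hpn hptn hxC hx hcCt).1 hc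
  obtain ⟨hbI, hbCt⟩ := mem_sdiff.1 hb
  rw [hτ.phiFun_insert_eq_true_iff hp hpn hptn hxC hx hbCt]
  by_cases hRA : RightAligned (series n τ C)
  · obtain ⟨z, hz, hxz, rfl⟩ := hτ.exists_alignShift_eq_of_rightAligned hp hpn hptn hxC hx hRA
      hbCt (mem_Icc.1 hbI).2 hab.le
    exact ⟨z, (mem_sdiff.1 hz).2, hτ.apply_insert_of_rightAligned hxC hx hRA hz hxz, rfl⟩
  · rw [alignShift_of_not_rightAligned hRA] at hbc
    have hCt : C.image (gammaAt n tn τ (insert x C)) = C.image (gammaAt n tn τ (insert y C)) :=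
      image_congr fun c hc => (hτ.gammaAt_insert_eq hp hpn hxC hx hyC hy hc).symm
    rw [hCt] at hbCt
    have hbC := hτ.mem_Icc_sdiff_of_not_rightAligned hp hpn hyC hy hRA hbCt (mem_Icc.1 hbI).1
      hbc.le
    exact ⟨b, (mem_sdiff.1 hbC).2, hτ.apply_insert_of_leftAligned hyC hy
      (hτ.leftAligned_of_not_rightAligned hp hpn hyC hy hRA) hbC hbc.le,
      alignShift_of_not_rightAligned hRA⟩

theorem phiFun_insert_or_phiFun_insert (hτ : IsCoSignotope n d τ) (hp : plusCount τ ≤ p)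
    (hpn : p + d ≤ n) (hptn : p + d ≤ tn) (ha : a ∈ Icc 1 tn \ Ct) (hc : c ∈ Icc 1 tn \ Ct)
    (hab : a < b) (hbc : b < c) (hbCt : b ∉ Ct) (hb : phiFun n tn τ (insert b Ct) = true) :
    phiFun n tn τ (insert a Ct) = true ∨ phiFun n tn τ (insert c Ct) = true := by
  obtain ⟨C, x, hxC, hx, rfl, rfl⟩ := hτ.exists_base_of_phiFun_insert hp hpn hptn hbCt hb
  obtain ⟨haI, haCt⟩ := mem_sdiff.1 ha
  obtain ⟨hcI, hcCt⟩ := mem_sdiff.1 hc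
  rw [hτ.phiFun_insert_eq_true_iff hp hpn hptn hxC hx haCt,
    hτ.phiFun_insert_eq_true_iff hp hpn hptn hxC hx hcCt]
  by_cases hRA : RightAligned (series n τ C)
  · obtain ⟨z, hz, hxz, rfl⟩ := hτ.exists_alignShift_eq_of_rightAligned hp hpn hptn hxC hx hRA
      hcCt (mem_Icc.1 hcI).2 hbc.le
    exact Or.inr ⟨z, (mem_sdiff.1 hz).2, hτ.apply_insert_of_rightAligned hxC hx hRA hz hxz, rfl⟩
  · rw [alignShift_of_not_rightAligned hRA] at hab
    have haC := hτ.mem_Icc_sdiff_of_not_rightAligned hp hpn hxC hx hRA haCt (mem_Icc.1 haI).1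
      hab.le
    exact Or.inl ⟨a, (mem_sdiff.1 haC).2, hτ.apply_insert_of_leftAligned hxC hx
      (hτ.leftAligned_of_not_rightAligned hp hpn hxC hx hRA) haC hab.le,
      alignShift_of_not_rightAligned hRA⟩

theorem isCoSignotope_phiFun (hτ : IsCoSignotope n d τ) (hp : plusCount τ ≤ p)
    (hpn : p + d ≤ n) (hptn : p + d ≤ tn) : IsCoSignotope tn d (phiFun n tn τ) := by
  refine ⟨fun A hA => ?_, fun Bt _ _ bt _ => ?_⟩
  · obtain ⟨B, hB, rfl⟩ := phiFun_eq_true_iff.1 hA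
    exact ⟨hτ.gammaFun_subset_Icc hp hpn hptn hB, hτ.card_gammaFun hp hpn hptn hB⟩
  rw [signChanges_series_le_one_iff]
  intro a ha b hb c hc hab hbc hac
  cases hb' : phiFun n tn τ (insert b (Bt.erase bt)) <;>
    cases ha' : phiFun n tn τ (insert a (Bt.erase bt))
  · rfl
  · rw [← hb', hτ.phiFun_insert_of_lt_of_lt hp hpn hptn hb hab hbc (mem_sdiff.1 ha).2 ha'
      (mem_sdiff.1 hc).2 (hac ▸ ha')]
  · rw [ha'] at hac
    rcases hτ.phiFun_insert_or_phiFun_insert hp hpn hptn ha hc hab hbc (mem_sdiff.1 hb).2 hb'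
      with h | h <;> simp_all
  · rfl

theorem min'_le_of_not_rightAligned (hτ : IsCoSignotope n d τ) (hp : plusCount τ ≤ p)
    (hpn : p + d ≤ n) (hxC : x ∉ C) (hx : τ (insert x C) = true)
    (hLA : ¬ RightAligned (series n τ C)) (hne : (Icc 1 n \ C).Nonempty) {z : ℕ}
    (hz : z ∈ Icc 1 tn \ C.image (gammaAt n tn τ (insert x C))) : (Icc 1 n \ C).min' hne ≤ z := by
  by_contra! hzm
  obtain ⟨hzI, hzCt⟩ := mem_sdiff.1 hz
  have hxdom := (hτ.base_of_plus hxC hx).2.2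
  have := hτ.mem_Icc_sdiff_of_not_rightAligned hp hpn hxC hx hLA hzCt (mem_Icc.1 hzI).1
    (hzm.le.trans (min'_le _ _ hxdom))
  exact absurd (min'_le _ _ this) (not_le.2 hzm)

theorem le_alignShift_max'_of_rightAligned (hτ : IsCoSignotope n d τ) (hp : plusCount τ ≤ p)
    (hpn : p + d ≤ n) (hptn : p + d ≤ tn) (hxC : x ∉ C) (hx : τ (insert x C) = true)
    (hRA : RightAligned (series n τ C)) (hne : (Icc 1 n \ C).Nonempty) {z : ℕ}
    (hz : z ∈ Icc 1 tn \ C.image (gammaAt n tn τ (insert x C))) :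
    z ≤ alignShift n tn τ C ((Icc 1 n \ C).max' hne) := by
  by_contra! hMz
  obtain ⟨hzI, hzCt⟩ := mem_sdiff.1 hz
  have hxM := le_max' _ _ (hτ.base_of_plus hxC hx).2.2
  rw [alignShift_of_rightAligned hRA] at hMz
  obtain ⟨y, hy, -, rfl⟩ := hτ.exists_alignShift_eq_of_rightAligned hp hpn hptn hxC hx hRA
    hzCt (mem_Icc.1 hzI).2 (by rw [alignShift_of_rightAligned hRA]; omega)
  rw [alignShift_of_rightAligned hRA] at hMz
  have := le_max' _ _ hy
  omega

theorem rightAligned_series_phiFun_iff (hτ : IsCoSignotope n d τ) (hp : plusCount τ ≤ p)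
    (hpn : p + d ≤ n) (hptn : p + d ≤ tn) (hxC : x ∉ C) (hx : τ (insert x C) = true) :
    RightAligned (series tn (phiFun n tn τ) (C.image (gammaAt n tn τ (insert x C)))) ↔
      RightAligned (series n τ C) := by
  set Ct := C.image (gammaAt n tn τ (insert x C))
  have hφ := hτ.isCoSignotope_phiFun hp hpn hptn
  have hφp : plusCount (phiFun n tn τ) ≤ p := (hτ.plusCount_phiFun hp hpn hptn).trans_le hp
  have hplus : ∀ {y}, y ∉ C → τ (insert y C) = true →
      phiFun n tn τ (insert (alignShift n tn τ C y) Ct) = true :=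
    fun hyC hy => hτ.phiFun_insert_alignShift hp hpn hxC hx hyC hy
  have hmem : ∀ {y}, y ∉ C → τ (insert y C) = true → alignShift n tn τ C y ∈ Icc 1 tn \ Ct :=
    fun hyC hy => hφ.mem_Icc_sdiff_of_plus (hτ.card_image_gammaAt hp hpn hptn hxC hx)
      (hplus hyC hy)
  have hxdom := (hτ.base_of_plus hxC hx).2.2
  have hne : (Icc 1 n \ C).Nonempty := ⟨x, hxdom⟩
  constructor
  · intro hRAφ
    by_contra hRA
    have hLA := hτ.leftAligned_of_not_rightAligned hp hpn hxC hx hRA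
    have hmdom := min'_mem _ hne
    have hm := hτ.apply_insert_of_leftAligned hxC hx hLA hmdom (min'_le _ _ hxdom)
    have hmm := hmem (mem_sdiff.1 hmdom).2 hm
    rw [alignShift_of_not_rightAligned hRA] at hmm
    have hneφ : (Icc 1 tn \ Ct).Nonempty := ⟨_, hmm⟩
    have hmin : (Icc 1 tn \ Ct).min' hneφ = (Icc 1 n \ C).min' hne :=
      le_antisymm (min'_le _ _ hmm) (le_min' _ _ _ fun z hz =>
        hτ.min'_le_of_not_rightAligned hp hpn hxC hx hRA hne hz)
    have hmφ : phiFun n tn τ (insert ((Icc 1 n \ C).min' hne) Ct) = true := by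
      simpa only [alignShift_of_not_rightAligned hRA] using hplus (mem_sdiff.1 hmdom).2 hm
    exact hRAφ.not_leftAligned
      ((hφ.leftAligned_iff hφp hptn (mem_sdiff.1 hmm).2 hmφ hneφ).2 (hmin ▸ hmφ))
  · intro hRA
    have hMdom := max'_mem _ hne
    have hM := hτ.apply_insert_of_rightAligned hxC hx hRA hMdom (le_max' _ _ hxdom)
    have hMφ := hmem (mem_sdiff.1 hMdom).2 hM
    have hneφ : (Icc 1 tn \ Ct).Nonempty := ⟨_, hMφ⟩
    have hmax : (Icc 1 tn \ Ct).max' hneφ = alignShift n tn τ C ((Icc 1 n \ C).max' hne) :=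
      le_antisymm (max'_le _ _ _ fun z hz =>
        hτ.le_alignShift_max'_of_rightAligned hp hpn hptn hxC hx hRA hne hz) (le_max' _ _ hMφ)
    refine (hφ.rightAligned_iff hφp hptn (mem_sdiff.1 hMφ).2 (hplus (mem_sdiff.1 hMdom).2 hM)
      hneφ).2 ?_
    rw [hmax]
    exact hplus (mem_sdiff.1 hMdom).2 hM

theorem gammaAt_phiFun_gammaFun (hτ : IsCoSignotope n d τ) (hp : plusCount τ ≤ p)
    (hpn : p + d ≤ n) (hptn : p + d ≤ tn) (hB : τ B = true) (hx : x ∈ B) :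
    gammaAt tn n (phiFun n tn τ) (gammaFun n tn τ B) (gammaAt n tn τ B x) = x := by
  rw [← insert_erase hx] at hB ⊢
  have hxC := notMem_erase x B
  rw [hτ.gammaFun_insert hp hpn hxC hB hxC hB, gammaAt_insert hxC,
    gammaAt_insert (hτ.alignShift_notMem_image hp hpn hptn hxC hB)]
  by_cases hRA : RightAligned (series n τ (B.erase x))
  · have := hτ.add_two_le_of_rightAligned hp hB (mem_insert_self x _) (by rwa [erase_insert hxC])
    rw [alignShift_of_rightAligned hRA, alignShift_of_rightAligned
      ((hτ.rightAligned_series_phiFun_iff hp hpn hptn hxC hB).2 hRA)]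
    omega
  · rw [alignShift_of_not_rightAligned hRA, alignShift_of_not_rightAligned
      ((hτ.rightAligned_series_phiFun_iff hp hpn hptn hxC hB).not.2 hRA)]

theorem gammaFun_phiFun_gammaFun (hτ : IsCoSignotope n d τ) (hp : plusCount τ ≤ p)
    (hpn : p + d ≤ n) (hptn : p + d ≤ tn) (hB : τ B = true) :
    gammaFun tn n (phiFun n tn τ) (gammaFun n tn τ B) = B := by
  conv_rhs => rw [← image_id (s := B)]
  rw [gammaFun_eq_image (n := tn), gammaFun_eq_image (B := B), image_image]
  refine image_congr fun x hx => ?_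
  exact hτ.gammaAt_phiFun_gammaFun hp hpn hptn hB hx

theorem phiFun_phiFun (hτ : IsCoSignotope n d τ) (hp : plusCount τ ≤ p) (hpn : p + d ≤ n)
    (hptn : p + d ≤ tn) : phiFun tn n (phiFun n tn τ) = τ := by
  funext A
  rw [Bool.eq_iff_iff, phiFun_eq_true_iff]
  constructor
  · rintro ⟨At, hAt, rfl⟩
    obtain ⟨B, hB, rfl⟩ := phiFun_eq_true_iff.1 hAt
    rwa [hτ.gammaFun_phiFun_gammaFun hp hpn hptn hB]
  · intro hA
    exact ⟨gammaFun n tn τ A, phiFun_eq_true_iff.2 ⟨A, hA, rfl⟩,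
      (hτ.gammaFun_phiFun_gammaFun hp hpn hptn hA).symm⟩

end PhiFun

section Order

variable {n tn d p : ℕ} {σ σ' : Finset ℕ → Bool} {B C : Finset ℕ} {x : ℕ}

theorem rightAligned_iff_of_le (hσ : IsCoSignotope n d σ) (hσ' : IsCoSignotope n d σ')
    (hpσ : plusCount σ ≤ p) (hpσ' : plusCount σ' ≤ p) (hpn : p + d ≤ n)
    (hle : ∀ A, σ A = true → σ' A = true) (hxC : x ∉ C)
    (hx : σ (insert x C) = true) :
    RightAligned (series n σ' C) ↔ RightAligned (series n σ C) := by
  have hne : (Icc 1 n \ C).Nonempty := ⟨x, (hσ.base_of_plus hxC hx).2.2⟩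
  have hx' := hle _ hx
  rw [hσ.rightAligned_iff hpσ hpn hxC hx hne, hσ'.rightAligned_iff hpσ' hpn hxC hx' hne]
  refine ⟨fun h => ?_, hle _⟩
  by_contra hmax
  have hLA := (hσ.rightAligned_iff hpσ hpn hxC hx hne).not.2 hmax
  have hmin := (hσ.leftAligned_iff hpσ hpn hxC hx hne).1
    (hσ.leftAligned_of_not_rightAligned hpσ hpn hxC hx hLA)
  have := (hσ'.leftAligned_iff hpσ' hpn hxC hx' hne).2 (hle _ hmin)
  exact ((hσ'.rightAligned_iff hpσ' hpn hxC hx' hne).2 h).not_leftAligned this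

theorem gammaFun_eq_of_le (hσ : IsCoSignotope n d σ) (hσ' : IsCoSignotope n d σ')
    (hpσ : plusCount σ ≤ p) (hpσ' : plusCount σ' ≤ p) (hpn : p + d ≤ n)
    (hle : ∀ A, σ A = true → σ' A = true) (hB : σ B = true) :
    gammaFun n tn σ' B = gammaFun n tn σ B := by
  rw [gammaFun_eq_image, gammaFun_eq_image]
  refine image_congr fun x hx => ?_
  have h := hσ.rightAligned_iff_of_le hσ' hpσ hpσ' hpn hle (notMem_erase x B)
    (by rwa [insert_erase hx])
  by_cases hRA : RightAligned (series n σ (B.erase x))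
  · rw [gammaAt, gammaAt, alignShift_of_rightAligned hRA, alignShift_of_rightAligned (h.2 hRA)]
  · rw [gammaAt, gammaAt, alignShift_of_not_rightAligned hRA,
      alignShift_of_not_rightAligned (h.not.2 hRA)]

theorem singleStep_phiFun (hσ : IsCoSignotope n d σ) (hσ' : IsCoSignotope n d σ')
    (hpσ : plusCount σ ≤ p) (hpσ' : plusCount σ' ≤ p) (hpn : p + d ≤ n) (hptn : p + d ≤ tn)
    (h : SingleStep σ σ') : SingleStep (phiFun n tn σ) (phiFun n tn σ') := by
  have hle : ∀ A, σ A = true → σ' A = true := fun A hA => h.1.subset hA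
  have hcount : plusCount (phiFun n tn σ') = plusCount (phiFun n tn σ) + 1 := by
    rw [hσ.plusCount_phiFun hpσ hpn hptn, hσ'.plusCount_phiFun hpσ' hpn hptn, h.2]
  refine ⟨Set.ssubset_iff_subset_ne.2 ⟨fun A hA => ?_, fun heq => ?_⟩, hcount⟩
  · obtain ⟨B, hB, rfl⟩ := phiFun_eq_true_iff.1 hA
    exact phiFun_eq_true_iff.2 ⟨B, hle B hB, (hσ.gammaFun_eq_of_le hσ' hpσ hpσ' hpn hle hB).symm⟩
  · rw [plusCount, plusCount, heq] at hcount
    omega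

end Order

end IsCoSignotope

theorem CoBruhatLe.map_phiFun {n tn d p : ℕ} {σ σ' : Finset ℕ → Bool} (h : CoBruhatLe n d σ σ')
    (hσ' : plusCount σ' ≤ p) (hpn : p + d ≤ n) (hptn : p + d ≤ tn) :
    CoBruhatLe tn d (phiFun n tn σ) (phiFun n tn σ') := by
  induction h with
  | refl => exact .refl
  | @tail b c _ hstep ih =>
    obtain ⟨hb, hc, hbc⟩ := hstep
    have hpb : plusCount b ≤ p := by have := hbc.2; omega
    exact .tail (ih hpb) ⟨hb.isCoSignotope_phiFun hpb hpn hptn,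
      hc.isCoSignotope_phiFun hσ' hpn hptn, hb.singleStep_phiFun hc hpb hσ' hpn hptn hbc⟩

theorem mapsTo_phiFun {n tn d p : ℕ} (hpn : p + d ≤ n) (hptn : p + d ≤ tn) :
    Set.MapsTo (phiFun n tn) (coSigSetLe n d p) (coSigSetLe tn d p) := fun _ hτ =>
  ⟨hτ.1.isCoSignotope_phiFun hτ.2 hpn hptn, (hτ.1.plusCount_phiFun hτ.2 hpn hptn).trans_le hτ.2⟩

theorem leftInvOn_phiFun {n tn d p : ℕ} (hpn : p + d ≤ n) (hptn : p + d ≤ tn) :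
    Set.LeftInvOn (phiFun tn n) (phiFun n tn) (coSigSetLe n d p) := fun _ hτ =>
  hτ.1.phiFun_phiFun hτ.2 hpn hptn

theorem statement13_general (n tn d p : ℕ)
    (hpn : p + d ≤ n) (hptn : p + d ≤ tn) :
    Set.BijOn (phiFun n tn) (coSigSetLe n d p) (coSigSetLe tn d p) ∧
    ∀ σ ∈ coSigSetLe n d p, ∀ σ' ∈ coSigSetLe n d p,
      (CoBruhatLe n d σ σ' ↔ CoBruhatLe tn d (phiFun n tn σ) (phiFun n tn σ')) := by
  refine ⟨Set.InvOn.bijOn ⟨leftInvOn_phiFun hpn hptn, leftInvOn_phiFun hptn hpn⟩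
    (mapsTo_phiFun hpn hptn) (mapsTo_phiFun hptn hpn),
    fun σ hσ σ' hσ' => ⟨fun h => ?_, fun h => ?_⟩⟩
  · exact h.map_phiFun hσ'.2 hpn hptn
  · have := h.map_phiFun (mapsTo_phiFun hpn hptn hσ').2 hptn hpn
    rwa [leftInvOn_phiFun hpn hptn hσ, leftInvOn_phiFun hpn hptn hσ'] at this

/-- **Lemma (the simple bijection).** The map `φ_{n,ñ,d,p}`, sending `τ` to the sign
function whose `+`-subsets are the sets `γ_{τ,ñ}(B)` for `B ∈ τ⁻¹(+)`, is a bijection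
between `𝒮̄_{≤p}(n,d)` and `𝒮̄_{≤p}(ñ,d)` preserving the complementary higher Bruhat
order. -/
theorem statement13 (n tn d p : ℕ) (hdn : d < n) (hdtn : d < tn)
    (hpn : p + d ≤ n) (hptn : p + d ≤ tn) :
    Set.BijOn (phiFun n tn) (coSigSetLe n d p) (coSigSetLe tn d p) ∧
    ∀ σ ∈ coSigSetLe n d p, ∀ σ' ∈ coSigSetLe n d p,
      (CoBruhatLe n d σ σ' ↔ CoBruhatLe tn d (phiFun n tn σ) (phiFun n tn σ')) :=
  statement13_general n tn d p hpn hptn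
end

section
/- For every integer $n \ge 1$: $|\mathcal{S}_{\le 2}(n,1)| = 1 + n + \binom{n}{2}$ and $|\mathcal{S}_{\le 2}(n+1,2)| = 1 + n + \binom{n}{2} + (n-1)$. In particular, for $n \ge 2$ there is no bijection between $\mathcal{S}_{\le 2}(n,1)$ and $\mathcal{S}_{\le 2}(n+1,2)$, showing that the condition $p \le \min\{r,\tilde{r}\}$ in the main bijection theorem cannot be dropped. -/
/-!
For `r = 1` the signotope condition is vacuous, since a sequence of two signs changes sign at
most once; so `𝒮_{≤2}(n,1)` consists of the sets of at most two singletons.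

For `r = 2` the condition on a triple `a < b < c` says that `σ{a,c}` equals `σ{a,b}` or
`σ{b,c}`. Hence a `+`-pair `{x,y}` forces a further `+`-pair `{x,c}` or `{c,y}` for every
`x < c < y`, and `+`-pairs `{a,a+1}, {a+1,a+2}` force `{a,a+2}`. With at most two `+`-pairs
this leaves: no pair; one pair `{a,a+1}`; two pairs `{a,a+1}, {b,b+1}` with `a + 2 ≤ b`; or
`{a,a+2}` together with `{a,a+1}` or `{a+1,a+2}`. On `[n+1]` these number
`1 + n + C(n-1,2) + 2(n-1) = 1 + n + C(n,2) + (n-1)`, which exceeds `1 + n + C(n,2)` once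
`n ≥ 2`.
-/

open Finset

lemma Finset.pair_eq_pair_iff {α : Type*} [DecidableEq α] {a b c d : α} :
    ({a, b} : Finset α) = {c, d} ↔ a = c ∧ b = d ∨ a = d ∧ b = c := by
  rw [← coe_inj, coe_pair, coe_pair, Set.pair_eq_pair_iff]

lemma exists_lt_of_card_eq_two {α : Type*} [LinearOrder α] {A : Finset α} (h : #A = 2) :
    ∃ x y, x < y ∧ A = {x, y} := by
  obtain ⟨x, y, hxy, rfl⟩ := card_eq_two.mp h
  rcases lt_or_gt_of_ne hxy with h | h
  · exact ⟨x, y, h, rfl⟩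
  · exact ⟨y, x, h, pair_comm x y⟩

lemma exists_lt_lt_of_card_eq_three {α : Type*} [LinearOrder α] {X : Finset α} (hX : #X = 3) :
    ∃ a b c, a < b ∧ b < c ∧ X = {a, b, c} := by
  obtain ⟨a, b, c, hl⟩ : ∃ a b c, X.sort (· ≤ ·) = [a, b, c] := by
    match X.sort (· ≤ ·), (hX ▸ X.length_sort (· ≤ ·) : (X.sort (· ≤ ·)).length = 3) with
    | [a, b, c], _ => exact ⟨a, b, c, rfl⟩
  have hp := hl ▸ X.pairwise_sort (· ≤ ·)
  have hn := hl ▸ X.sort_nodup (· ≤ ·)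
  simp only [List.pairwise_cons, List.nodup_cons, List.mem_cons] at hp hn
  refine ⟨a, b, c, by grind, by grind, ?_⟩
  rw [← X.sort_toFinset (· ≤ ·), hl]
  simp

lemma sort_triple {α : Type*} [LinearOrder α] {a b c : α} (hab : a < b) (hbc : b < c) :
    ({a, b, c} : Finset α).sort (· ≤ ·) = [a, b, c] := by
  have hl : ({a, b, c} : Finset α) = [a, b, c].toFinset := by simp
  rw [hl, List.toFinset_sort _ (by grind)]
  grind

lemma ofPlusSet_eq_true {S : Set (Finset ℕ)} {A : Finset ℕ} : ofPlusSet S A = true ↔ A ∈ S := by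
  classical
  simp [ofPlusSet]

lemma ofPlusSet_eq_ofPlusSet_iff {S : Set (Finset ℕ)} {A B : Finset ℕ} :
    ofPlusSet S A = ofPlusSet S B ↔ (A ∈ S ↔ B ∈ S) := by
  rw [Bool.eq_iff_iff, ofPlusSet_eq_true, ofPlusSet_eq_true]

lemma ofPlusSet_injective : Function.Injective ofPlusSet := fun _ _ h =>
  Set.ext fun _ => by rw [← ofPlusSet_eq_true, h, ofPlusSet_eq_true]

lemma ofPlusSet_setOf_eq_true (σ : Finset ℕ → Bool) : ofPlusSet {A | σ A = true} = σ :=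
  funext fun _ => Bool.eq_iff_iff.mpr ofPlusSet_eq_true

lemma mem_sigSetLe_ofPlusSet {n r p : ℕ} {s : Finset (Finset ℕ)} :
    ofPlusSet ↑s ∈ sigSetLe n r p ↔ IsSignotope n r (ofPlusSet ↑s) ∧ #s ≤ p := by
  have : {A | ofPlusSet ↑s A = true} = ↑s := Set.ext fun _ => ofPlusSet_eq_true
  rw [sigSetLe, Set.mem_ofPred_eq, plusCount, this, Set.ncard_coe_finset]

lemma ncard_sigSetLe_eq_card {n r p : ℕ} {F : Finset (Finset (Finset ℕ))}
    (hF : ∀ s : Finset (Finset ℕ), s ∈ F ↔ ofPlusSet ↑s ∈ sigSetLe n r p) :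
    (sigSetLe n r p).ncard = #F := by
  have himage : sigSetLe n r p = (ofPlusSet ∘ SetLike.coe) '' (F : Set (Finset (Finset ℕ))) := by
    ext σ
    refine ⟨fun hσ => ?_, ?_⟩
    · have hfin : {A | σ A = true}.Finite :=
        (Icc 1 n).powerset.finite_toSet.subset fun A hA => mem_powerset.mpr (hσ.1.1 A hA).1
      have hσs : ofPlusSet ↑hfin.toFinset = σ := by
        rw [Set.Finite.coe_toFinset, ofPlusSet_setOf_eq_true]
      exact ⟨hfin.toFinset, (hF _).mpr (hσs.symm ▸ hσ), hσs⟩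
    · rintro ⟨s, hs, rfl⟩
      exact (hF s).mp hs
  rw [himage, Set.ncard_image_of_injective _ (ofPlusSet_injective.comp coe_injective),
    Set.ncard_coe_finset]

lemma signChanges_le_length_sub_one (l : List Bool) : signChanges l ≤ l.length - 1 :=
  calc signChanges l ≤ (l.zip l.tail).length := List.length_filter_le _ _
    _ ≤ l.length - 1 := by simp

lemma signChanges_triple (x y z : Bool) : signChanges [x, y, z] ≤ 1 ↔ y = x ∨ y = z := by
  revert x y z
  decide

lemma isSignotope_one_iff {n : ℕ} {σ : Finset ℕ → Bool} :
    IsSignotope n 1 σ ↔ ∀ A, σ A = true → A ⊆ Icc 1 n ∧ #A = 1 := by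
  refine ⟨And.left, fun h => ⟨h, fun X _ hX => ?_⟩⟩
  simpa [hX] using signChanges_le_length_sub_one ((X.sort (· ≤ ·)).map fun x => σ (X.erase x))

lemma isSignotope_two_iff {n : ℕ} {σ : Finset ℕ → Bool} :
    IsSignotope n 2 σ ↔ (∀ A, σ A = true → A ⊆ Icc 1 n ∧ #A = 2) ∧
      ∀ a b c, 1 ≤ a → a < b → b < c → c ≤ n → σ {a, c} = σ {b, c} ∨ σ {a, c} = σ {a, b} := by
  have key : ∀ a b c, a < b → b < c →
      (signChanges ((({a, b, c} : Finset ℕ).sort (· ≤ ·)).map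
        fun x => σ (({a, b, c} : Finset ℕ).erase x)) ≤ 1 ↔
        σ {a, c} = σ {b, c} ∨ σ {a, c} = σ {a, b}) := by
    intro a b c hab hbc
    have e₁ : ({a, b, c} : Finset ℕ).erase a = {b, c} := by grind
    have e₂ : ({a, b, c} : Finset ℕ).erase b = {a, c} := by grind
    have e₃ : ({a, b, c} : Finset ℕ).erase c = {a, b} := by grind
    simp only [sort_triple hab hbc, List.map, e₁, e₂, e₃, signChanges_triple]
  refine and_congr_right fun _ => ⟨fun h a b c ha hab hbc hc => ?_, fun h X hX hcard => ?_⟩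
  · exact (key a b c hab hbc).mp (h _ (by grind) (by grind))
  · obtain ⟨a, b, c, hab, hbc, rfl⟩ := exists_lt_lt_of_card_eq_three hcard
    have ha := mem_Icc.mp (hX (by simp : a ∈ _))
    have hc := mem_Icc.mp (hX (by simp : c ∈ _))
    exact (key a b c hab hbc).mpr (h a b c ha.1 hab hbc hc.2)

lemma card_filter_card_le_powerset {α : Type*} (T : Finset α) (k : ℕ) :
    #{u ∈ T.powerset | #u ≤ k} = ∑ i ∈ range (k + 1), (#T).choose i := by
  classical
  have : {u ∈ T.powerset | #u ≤ k} = (range (k + 1)).biUnion (T.powersetCard ·) := by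
    ext u
    simp only [mem_filter, mem_powerset, mem_biUnion, mem_range, mem_powersetCard]
    exact ⟨fun ⟨hT, hk⟩ => ⟨#u, by omega, hT, rfl⟩, fun ⟨i, hi, hT, hu⟩ => ⟨hT, by omega⟩⟩
  rw [this, card_biUnion (fun i _ j _ hij => T.pairwise_disjoint_powersetCard hij)]
  simp [card_powersetCard]

theorem ncard_sigSetLe_one (n p : ℕ) :
    (sigSetLe n 1 p).ncard = ∑ i ∈ range (p + 1), n.choose i := by
  rw [ncard_sigSetLe_eq_card (F := {s ∈ ((Icc 1 n).powersetCard 1).powerset | #s ≤ p}),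
    card_filter_card_le_powerset, card_powersetCard, Nat.card_Icc, Nat.choose_one_right,
    Nat.add_sub_cancel]
  intro s
  simp only [mem_filter, mem_powerset, mem_sigSetLe_ofPlusSet, isSignotope_one_iff,
    ofPlusSet_eq_true, Finset.mem_coe, subset_iff, mem_powersetCard]

def succPair (a : ℕ) : Finset ℕ := {a, a + 1}

namespace IsSignotope

variable {m : ℕ} {s : Finset (Finset ℕ)}

lemma exists_eq_pair_of_mem (hσ : IsSignotope m 2 (ofPlusSet ↑s)) {A : Finset ℕ} (hA : A ∈ s) :
    ∃ x y, 1 ≤ x ∧ x < y ∧ y ≤ m ∧ A = {x, y} := by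
  obtain ⟨hsub, hcard⟩ := hσ.1 A (ofPlusSet_eq_true.mpr hA)
  obtain ⟨x, y, hxy, rfl⟩ := exists_lt_of_card_eq_two hcard
  have hx := mem_Icc.mp (hsub (mem_insert_self x {y}))
  have hy := mem_Icc.mp (hsub (mem_insert_of_mem (mem_singleton_self y)))
  exact ⟨x, y, hx.1, hxy, hy.2, rfl⟩

lemma mem_or_mem_of_between (hσ : IsSignotope m 2 (ofPlusSet ↑s)) {x c y : ℕ}
    (hxy : {x, y} ∈ s) (hx : 1 ≤ x) (hxc : x < c) (hcy : c < y) (hy : y ≤ m) :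
    {x, c} ∈ s ∨ {c, y} ∈ s := by
  have := (isSignotope_two_iff.mp hσ).2 x c y hx hxc hcy hy
  simp only [ofPlusSet_eq_ofPlusSet_iff, mem_coe] at this
  tauto

lemma wide_mem_of_succPair_mem (hσ : IsSignotope m 2 (ofPlusSet ↑s)) {a : ℕ}
    (ha : 1 ≤ a) (hm : a + 2 ≤ m) (h₁ : succPair a ∈ s) (h₂ : succPair (a + 1) ∈ s) :
    {a, a + 2} ∈ s := by
  have := (isSignotope_two_iff.mp hσ).2 a (a + 1) (a + 2) ha (by omega) (by omega) hm
  simp only [ofPlusSet_eq_ofPlusSet_iff, mem_coe] at this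
  unfold succPair at h₁ h₂
  tauto

lemma eq_add_two_of_mem (hσ : IsSignotope m 2 (ofPlusSet ↑s)) (hs : #s ≤ 2) {x y : ℕ}
    (hxy : {x, y} ∈ s) (hx : 1 ≤ x) (hgap : x + 2 ≤ y) (hy : y ≤ m) :
    y = x + 2 ∧ (succPair x ∈ s ∨ succPair (x + 1) ∈ s) := by
  have h₁ := hσ.mem_or_mem_of_between hxy hx (by omega : x < x + 1) (by omega) hy
  obtain rfl : y = x + 2 := by
    by_contra hne
    have h₂ := hσ.mem_or_mem_of_between hxy hx (by omega : x < x + 2) (by omega) hy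
    refine absurd hs (not_le.mpr (two_lt_card.mpr ?_))
    rcases h₁ with h₁ | h₁ <;> rcases h₂ with h₂ | h₂ <;>
      exact ⟨_, hxy, _, h₁, _, h₂, by simp only [ne_eq, Finset.pair_eq_pair_iff]; omega⟩
  exact ⟨rfl, h₁⟩

lemma add_two_le_of_succPair_mem (hσ : IsSignotope m 2 (ofPlusSet ↑s)) (hs : #s ≤ 2) {a b : ℕ}
    (ha : 1 ≤ a) (hab : a < b) (hb : b + 1 ≤ m) (h₁ : succPair a ∈ s) (h₂ : succPair b ∈ s) :
    a + 2 ≤ b := by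
  by_contra! hb'
  obtain rfl : b = a + 1 := by omega
  have h₃ := hσ.wide_mem_of_succPair_mem ha hb h₁ h₂
  refine absurd hs (not_le.mpr (two_lt_card.mpr ⟨_, h₁, _, h₂, _, h₃, ?_⟩))
  simp only [succPair, ne_eq, Finset.pair_eq_pair_iff]
  omega

end IsSignotope

def singletonPlusSets (n : ℕ) : Finset (Finset (Finset ℕ)) :=
  (Icc 1 n).image fun a => {succPair a}

-- `(a, b)` with `a < b` stands for `{a, a+1}, {b+1, b+2}`, so that there are `C(n-1, 2)` of them.
def apartPlusSets (n : ℕ) : Finset (Finset (Finset ℕ)) :=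
  {x ∈ Icc 1 (n - 1) ×ˢ Icc 1 (n - 1) | x.1 < x.2}.image
    fun x => {succPair x.1, succPair (x.2 + 1)}

def widePlusSets (n : ℕ) : Finset (Finset (Finset ℕ)) :=
  (Icc 1 (n - 1) ×ˢ range 2).image fun x => {succPair (x.1 + x.2), {x.1, x.1 + 2}}

def smallPlusSets (n : ℕ) : Finset (Finset (Finset ℕ)) :=
  {∅} ∪ singletonPlusSets n ∪ apartPlusSets n ∪ widePlusSets n

lemma mem_smallPlusSets {n : ℕ} {s : Finset (Finset ℕ)} :
    s ∈ smallPlusSets n ↔ s = ∅ ∨ (∃ a, 1 ≤ a ∧ a ≤ n ∧ s = {succPair a}) ∨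
      (∃ a b, 1 ≤ a ∧ a + 2 ≤ b ∧ b ≤ n ∧ s = {succPair a, succPair b}) ∨
      (∃ a i, 1 ≤ a ∧ a ≤ n - 1 ∧ i < 2 ∧ s = {succPair (a + i), {a, a + 2}}) := by
  simp only [smallPlusSets, singletonPlusSets, apartPlusSets, widePlusSets, mem_union,
    mem_singleton, mem_image, mem_filter, mem_product, mem_Icc, mem_range, Prod.exists]
  constructor
  · rintro (((rfl | ⟨a, ⟨ha, hn⟩, rfl⟩) | ⟨a, b, ⟨⟨⟨ha, -⟩, -, hb⟩, hab⟩, rfl⟩) |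
      ⟨a, i, ⟨⟨ha, han⟩, hi⟩, rfl⟩)
    · exact Or.inl rfl
    · exact Or.inr (Or.inl ⟨a, ha, hn, rfl⟩)
    · exact Or.inr (Or.inr (Or.inl ⟨a, b + 1, ha, by omega, by omega, rfl⟩))
    · exact Or.inr (Or.inr (Or.inr ⟨a, i, ha, han, hi, rfl⟩))
  · rintro (rfl | ⟨a, ha, hn, rfl⟩ | ⟨a, b, ha, hab, hb, rfl⟩ | ⟨a, i, ha, han, hi, rfl⟩)
    · exact Or.inl (Or.inl (Or.inl rfl))
    · exact Or.inl (Or.inl (Or.inr ⟨a, ⟨ha, hn⟩, rfl⟩))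
    · refine Or.inl (Or.inr ⟨a, b - 1, ⟨⟨⟨ha, by omega⟩, by omega, by omega⟩, by omega⟩, ?_⟩)
      rw [Nat.sub_add_cancel (by omega)]
    · exact Or.inr ⟨a, i, ⟨⟨ha, han⟩, hi⟩, rfl⟩

lemma card_singletonPlusSets (n : ℕ) : #(singletonPlusSets n) = n := by
  rw [singletonPlusSets, card_image_of_injective, Nat.card_Icc, Nat.add_sub_cancel]
  intro a b h
  simp only [singleton_inj, succPair, Finset.pair_eq_pair_iff] at h
  omega

lemma card_apartPlusSets (n : ℕ) : #(apartPlusSets n) = (n - 1).choose 2 := by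
  rw [apartPlusSets, card_image_of_injOn, card_product_filter_lt, Nat.card_Icc,
    Nat.add_sub_cancel]
  rintro ⟨a, b⟩ hab ⟨c, d⟩ hcd h
  simp only [coe_filter, mem_product, mem_Icc, Set.mem_ofPred_eq] at hab hcd
  simp only [succPair, Finset.pair_eq_pair_iff, Prod.mk.injEq] at h ⊢
  omega

lemma card_widePlusSets (n : ℕ) : #(widePlusSets n) = (n - 1) * 2 := by
  rw [widePlusSets, card_image_of_injOn, card_product, Nat.card_Icc, Nat.add_sub_cancel,
    card_range]
  rintro ⟨a, i⟩ hai ⟨b, j⟩ hbj h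
  simp only [coe_product, coe_Icc, coe_range, Set.mem_prod, Set.mem_Icc, Set.mem_Iio] at hai hbj
  simp only [succPair, Finset.pair_eq_pair_iff, Prod.mk.injEq] at h ⊢
  omega

lemma disjoint_apartPlusSets (n : ℕ) :
    Disjoint ({∅} ∪ singletonPlusSets n) (apartPlusSets n) := by
  refine disjoint_left.mpr fun t ht ht' => ?_
  have hcard : #t = 2 := by
    obtain ⟨⟨a, b⟩, hab, rfl⟩ := mem_image.mp ht'
    simp only [mem_filter] at hab
    exact card_pair (by simp only [succPair, ne_eq, Finset.pair_eq_pair_iff]; omega)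
  simp only [singletonPlusSets, mem_union, mem_singleton, mem_image] at ht
  rcases ht with rfl | ⟨a, -, rfl⟩ <;> simp at hcard

lemma disjoint_widePlusSets (n : ℕ) :
    Disjoint ({∅} ∪ singletonPlusSets n ∪ apartPlusSets n) (widePlusSets n) := by
  refine disjoint_left.mpr fun t ht ht' => ?_
  obtain ⟨⟨a, i⟩, -, h⟩ := mem_image.mp ht'
  have hwide : ∀ c, {a, a + 2} ≠ succPair c := by
    simp only [succPair, ne_eq, Finset.pair_eq_pair_iff]
    omega
  have hmem : ({a, a + 2} : Finset ℕ) ∈ t := by rw [← h]; simp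
  simp only [singletonPlusSets, apartPlusSets, mem_union, mem_singleton, mem_image] at ht
  rcases ht with (rfl | ⟨c, -, rfl⟩) | ⟨⟨c, d⟩, -, rfl⟩ <;> simp [hwide] at hmem

lemma card_smallPlusSets (n : ℕ) :
    #(smallPlusSets n) = 1 + n + (n - 1).choose 2 + (n - 1) * 2 := by
  rw [smallPlusSets, card_union_of_disjoint (disjoint_widePlusSets n),
    card_union_of_disjoint (disjoint_apartPlusSets n),
    card_union_of_disjoint (by simp [singletonPlusSets]), card_singleton,
    card_singletonPlusSets, card_apartPlusSets, card_widePlusSets]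

lemma pair_subset_Icc_card {x y m : ℕ} (hx : 1 ≤ x) (hxy : x < y) (hy : y ≤ m) :
    ({x, y} : Finset ℕ) ⊆ Icc 1 m ∧ #{x, y} = 2 :=
  ⟨by grind, card_pair hxy.ne⟩

lemma mem_sigSetLe_of_mem_smallPlusSets {n : ℕ} {s : Finset (Finset ℕ)}
    (hs : s ∈ smallPlusSets n) : ofPlusSet ↑s ∈ sigSetLe (n + 1) 2 2 := by
  rw [mem_sigSetLe_ofPlusSet, isSignotope_two_iff]
  simp only [ofPlusSet_eq_ofPlusSet_iff, ofPlusSet_eq_true, mem_coe]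
  rcases mem_smallPlusSets.mp hs with rfl | ⟨a, ha, han, rfl⟩ | ⟨a, b, ha, hab, hbn, rfl⟩ |
    ⟨a, i, ha, han, hi, rfl⟩
  · simp
  · refine ⟨⟨fun A hA => ?_, fun x y z hx hxy hyz hz => ?_⟩,
      (card_singleton _).trans_le one_le_two⟩
    · rw [mem_singleton.mp hA]
      exact pair_subset_Icc_card ha (by omega) (by omega)
    · simp only [mem_singleton, succPair, Finset.pair_eq_pair_iff]
      omega
  all_goals
    refine ⟨⟨fun A hA => ?_, fun x y z hx hxy hyz hz => ?_⟩, card_le_two⟩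
    · simp only [mem_insert, mem_singleton] at hA
      rcases hA with rfl | rfl <;>
        exact pair_subset_Icc_card (by omega) (by omega) (by omega)
    · simp only [mem_insert, mem_singleton, succPair, Finset.pair_eq_pair_iff]
      omega

lemma exists_eq_widePlusSet_of_isSignotope {n : ℕ} {A B : Finset ℕ}
    (hσ : IsSignotope (n + 1) 2 (ofPlusSet ↑({A, B} : Finset (Finset ℕ)))) (hAB : A ≠ B)
    {x y : ℕ} (hA : A = {x, y}) (hx : 1 ≤ x) (hgap : x + 2 ≤ y) (hy : y ≤ n + 1) :
    ∃ a i, 1 ≤ a ∧ a ≤ n - 1 ∧ i < 2 ∧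
      ({A, B} : Finset (Finset ℕ)) = {succPair (a + i), {a, a + 2}} := by
  subst hA
  obtain ⟨rfl, h⟩ := hσ.eq_add_two_of_mem card_le_two (mem_insert_self _ _) hx hgap hy
  obtain ⟨i, hi, hB⟩ : ∃ i < 2, succPair (x + i) = B := by
    simp only [mem_insert, mem_singleton, succPair, Finset.pair_eq_pair_iff] at h
    rcases h with (h | h) | (h | h)
    · omega
    · exact ⟨0, by norm_num, h⟩
    · omega
    · exact ⟨1, by norm_num, h⟩
  exact ⟨x, i, hx, by omega, hi, by rw [← hB, pair_comm]⟩

lemma eq_apartPlusSet_or_widePlusSet_of_isSignotope {n : ℕ} {A B : Finset ℕ}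
    (hσ : IsSignotope (n + 1) 2 (ofPlusSet ↑({A, B} : Finset (Finset ℕ)))) (hAB : A ≠ B) :
    (∃ a b, 1 ≤ a ∧ a + 2 ≤ b ∧ b ≤ n ∧
      ({A, B} : Finset (Finset ℕ)) = {succPair a, succPair b}) ∨
    (∃ a i, 1 ≤ a ∧ a ≤ n - 1 ∧ i < 2 ∧
      ({A, B} : Finset (Finset ℕ)) = {succPair (a + i), {a, a + 2}}) := by
  obtain ⟨a, a', ha, haa', ha', rfl⟩ := hσ.exists_eq_pair_of_mem (mem_insert_self _ _)
  obtain ⟨b, b', hb, hbb', hb', rfl⟩ :=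
    hσ.exists_eq_pair_of_mem (mem_insert_of_mem (mem_singleton_self _))
  by_cases hwa : a + 2 ≤ a'
  · exact Or.inr (exists_eq_widePlusSet_of_isSignotope hσ hAB rfl ha hwa ha')
  by_cases hwb : b + 2 ≤ b'
  · rw [pair_comm] at hσ ⊢
    exact Or.inr (exists_eq_widePlusSet_of_isSignotope hσ hAB.symm rfl hb hwb hb')
  obtain rfl : a' = a + 1 := by omega
  obtain rfl : b' = b + 1 := by omega
  have hA : succPair a ∈ ({succPair a, succPair b} : Finset (Finset ℕ)) := mem_insert_self _ _
  have hB : succPair b ∈ ({succPair a, succPair b} : Finset (Finset ℕ)) :=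
    mem_insert_of_mem (mem_singleton_self _)
  rcases lt_or_gt_of_ne (fun h => hAB (by rw [h]) : a ≠ b) with hlt | hlt
  · exact Or.inl ⟨a, b, ha, hσ.add_two_le_of_succPair_mem card_le_two ha hlt hb' hA hB,
      by omega, rfl⟩
  · rw [pair_comm]
    exact Or.inl ⟨b, a, hb, hσ.add_two_le_of_succPair_mem card_le_two hb hlt ha' hB hA,
      by omega, rfl⟩

lemma mem_smallPlusSets_of_mem_sigSetLe {n : ℕ} {s : Finset (Finset ℕ)}
    (h : ofPlusSet ↑s ∈ sigSetLe (n + 1) 2 2) : s ∈ smallPlusSets n := by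
  obtain ⟨hσ, hs⟩ := mem_sigSetLe_ofPlusSet.mp h
  rw [mem_smallPlusSets]
  rcases (by omega : #s = 0 ∨ #s = 1 ∨ #s = 2) with hc | hc | hc
  · exact Or.inl (card_eq_zero.mp hc)
  · obtain ⟨A, rfl⟩ := card_eq_one.mp hc
    obtain ⟨x, y, hx, hxy, hy, rfl⟩ := hσ.exists_eq_pair_of_mem (mem_singleton_self _)
    obtain rfl : y = x + 1 := by
      by_contra hne
      obtain ⟨rfl, h⟩ := hσ.eq_add_two_of_mem hs (mem_singleton_self _) hx (by omega) hy
      simp only [mem_singleton, succPair, Finset.pair_eq_pair_iff] at h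
      omega
    exact Or.inr (Or.inl ⟨x, hx, by omega, rfl⟩)
  · obtain ⟨A, B, hAB, rfl⟩ := card_eq_two.mp hc
    exact Or.inr (Or.inr (eq_apartPlusSet_or_widePlusSet_of_isSignotope hσ hAB))

theorem ncard_sigSetLe_two (n : ℕ) :
    (sigSetLe (n + 1) 2 2).ncard = 1 + n + n.choose 2 + (n - 1) := by
  rw [ncard_sigSetLe_eq_card fun s =>
      ⟨mem_sigSetLe_of_mem_smallPlusSets, mem_smallPlusSets_of_mem_sigSetLe⟩,
    card_smallPlusSets]
  rcases n with _ | n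
  · rfl
  · have hchoose : (n + 1).choose 2 = n + n.choose 2 := by
      rw [Nat.choose_succ_succ', Nat.choose_one_right]
    rw [Nat.add_sub_cancel, hchoose]
    omega

/-- **Tightness.** `|𝒮_{≤2}(n,1)| = 1 + n + C(n,2)` and
`|𝒮_{≤2}(n+1,2)| = 1 + n + C(n,2) + (n-1)`; in particular for `n ≥ 2` there is no
bijection between `𝒮_{≤2}(n,1)` and `𝒮_{≤2}(n+1,2)`. -/
theorem statement19 :
    (∀ n : ℕ, 1 ≤ n →
      (sigSetLe n 1 2).ncard = 1 + n + n.choose 2 ∧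
      (sigSetLe (n + 1) 2 2).ncard = 1 + n + n.choose 2 + (n - 1)) ∧
    (∀ n : ℕ, 2 ≤ n →
      ¬ Nonempty (↥(sigSetLe n 1 2) ≃ ↥(sigSetLe (n + 1) 2 2))) := by
  have hone (n : ℕ) : (sigSetLe n 1 2).ncard = 1 + n + n.choose 2 := by
    simp [ncard_sigSetLe_one, sum_range_succ]
  refine ⟨fun n _ => ⟨hone n, ncard_sigSetLe_two n⟩, fun n hn ⟨e⟩ => ?_⟩
  have hcard := Nat.card_congr e
  rw [Nat.card_coe_set_eq, Nat.card_coe_set_eq, hone, ncard_sigSetLe_two] at hcard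
  omega
end
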